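/- arXiv:2111.05970 — 6 statements merged into one kernel-verified Lean document; each statement's English description precedes it below -/
import Mathlib

section
/- Fix an integer e ≥ 2 and i ∈ ℤ/eℤ. Under the Plancherel measure Pl_n on partitions of n, the random variable c_i(λ)/n converges in probability to 1/e as n → +∞: for every ε > 0, Pl_n{λ ∈ P_n : |c_i(λ)/n − 1/e| > ε} → 0 as n → +∞. -/
open MeasureTheory Filter Real

noncomputable section

/-- The number of standard Young tableaux of shape `μ`: bijective fillings of the cells
with `0, …, n-1` that increase along rows and down columns. -/
def stdCount (μ : YoungDiagram) : ℕ :=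
  Nat.card {T : {c : ℕ × ℕ // c ∈ μ} → Fin μ.card //
    Function.Bijective T ∧
    (∀ (a b : ℕ) (h : (a, b) ∈ μ) (h' : (a + 1, b) ∈ μ),
        T ⟨(a, b), h⟩ < T ⟨(a + 1, b), h'⟩) ∧
    (∀ (a b : ℕ) (h : (a, b) ∈ μ) (h' : (a, b + 1) ∈ μ),
        T ⟨(a, b), h⟩ < T ⟨(a, b + 1), h'⟩)}

/-- The Poissonised Plancherel weight of a partition (Young diagram). -/
def plancherelP (t : ℝ) (μ : YoungDiagram) : ℝ :=
  Real.exp (-t) * t ^ μ.card * ((stdCount μ : ℝ) / (Nat.factorial μ.card)) ^ 2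

/-- Number of `i`-nodes of `μ` : cells `(a,b)` with `b - a ≡ i (mod e)`. -/
def cNodes (e : ℕ) (i : ZMod e) (μ : YoungDiagram) : ℕ :=
  (μ.cells.filter fun c => (((c.2 : ℤ) - (c.1 : ℤ)) : ZMod e) = i).card

/-- `x_i(λ) = c_i(λ) - c_{i+1}(λ)`. -/
def xVar (e : ℕ) (i : ZMod e) (μ : YoungDiagram) : ℤ :=
  (cNodes e i μ : ℤ) - (cNodes e (i + 1) μ : ℤ)

/-- Size of the `e`-core, via `|λ̄| = (e/2) Σ_i x_i(λ)² + Σ_{i=0}^{e-1} i·x_i(λ)`. -/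
def coreSize (e : ℕ) (μ : YoungDiagram) : ℝ :=
  (e : ℝ) / 2 * ∑ i ∈ Finset.range e, ((xVar e (i : ZMod e) μ : ℝ)) ^ 2
    + ∑ i ∈ Finset.range e, (i : ℝ) * (xVar e (i : ZMod e) μ : ℝ)

/-- Expectation under the Poissonised Plancherel measure. -/
def expT (t : ℝ) (f : YoungDiagram → ℝ) : ℝ := ∑' μ : YoungDiagram, plancherelP t μ * f μ

/-- Covariance under the Poissonised Plancherel measure. -/
def covT (t : ℝ) (f g : YoungDiagram → ℝ) : ℝ :=
  expT t (fun μ => f μ * g μ) - expT t f * expT t g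

/-- The descent set `D(λ) = {λ_a - a : a ≥ 1} ⊆ ℤ`. -/
def descents (μ : YoungDiagram) : Set ℤ :=
  {d | ∃ a : ℕ, d = (μ.rowLen a : ℤ) - (a : ℤ) - 1}

/-- Correlation function `ρ^t(k) = Pl^t{λ : k ∈ D(λ)}`. -/
def rho (t : ℝ) (k : ℤ) : ℝ :=
  ∑' μ : {μ : YoungDiagram // k ∈ descents μ}, plancherelP t μ.1

/-- Bessel function of the first kind of integer order. -/
def besselJ (n : ℤ) (x : ℝ) : ℝ :=
  if 0 ≤ n then
    ∑' k : ℕ, (-1 : ℝ) ^ k * (x / 2) ^ (n.toNat + 2 * k) /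
      (Nat.factorial k * Nat.factorial (n.toNat + k))
  else
    (-1 : ℝ) ^ n.natAbs * ∑' k : ℕ, (-1 : ℝ) ^ k * (x / 2) ^ (n.natAbs + 2 * k) /
      (Nat.factorial k * Nat.factorial (n.natAbs + k))

/-- The discrete Bessel kernel `𝕁(x,y)`. -/
def kernelJ (t : ℝ) (x y : ℤ) : ℝ :=
  Real.sqrt t * (besselJ x (2 * Real.sqrt t) * besselJ (y + 1) (2 * Real.sqrt t)
    - besselJ (x + 1) (2 * Real.sqrt t) * besselJ y (2 * Real.sqrt t)) / ((x : ℝ) - (y : ℝ))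


/-- Variance under the Poissonised Plancherel measure. -/
def varT (t : ℝ) (f : YoungDiagram → ℝ) : ℝ :=
  expT t (fun μ => f μ ^ 2) - (expT t f) ^ 2

/-- The Plancherel measure on partitions of `n`. -/
def plancherelN (n : ℕ) (μ : YoungDiagram) : ℝ :=
  (stdCount μ : ℝ) ^ 2 / (Nat.factorial n : ℝ)

def rcnt (e : ℕ) (i : ZMod e) (a l : ℕ) : ℕ :=
  ((Finset.range l).filter fun b : ℕ => (((b : ℤ) - (a : ℤ)) : ZMod e) = i).card

lemma cells_eq (μ : YoungDiagram) {N : ℕ} (hN : μ.colLen 0 ≤ N) :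
    μ.cells = (Finset.range N).biUnion
      (fun a => (Finset.range (μ.rowLen a)).image fun b => (a, b)) := by
  ext ⟨a, b⟩
  simp only [Finset.mem_biUnion, Finset.mem_range, Finset.mem_image, YoungDiagram.mem_cells]
  constructor
  · intro h
    refine ⟨a, ?_, b, ?_, rfl⟩
    · have : (a, 0) ∈ μ := μ.up_left_mem le_rfl (Nat.zero_le b) h
      have := YoungDiagram.mem_iff_lt_colLen.mp this
      omega
    · exact YoungDiagram.mem_iff_lt_rowLen.mp h
  · rintro ⟨a', -, b', hb', h⟩
    obtain ⟨rfl, rfl⟩ : a' = a ∧ b' = b := by simpa [Prod.ext_iff] using h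
    exact YoungDiagram.mem_iff_lt_rowLen.mpr hb'

lemma cNodes_eq_sum (e : ℕ) (i : ZMod e) (μ : YoungDiagram) {N : ℕ} (hN : μ.colLen 0 ≤ N) :
    cNodes e i μ = ∑ a ∈ Finset.range N, rcnt e i a (μ.rowLen a) := by
  classical
  rw [cNodes, cells_eq μ hN, Finset.filter_biUnion, Finset.card_biUnion]
  · refine Finset.sum_congr rfl fun a _ => ?_
    have h1 : ((Finset.range (μ.rowLen a)).image fun b => (a, b)).filter
        (fun c : ℕ × ℕ => (((c.2 : ℤ) - (c.1 : ℤ)) : ZMod e) = i)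
        = ((Finset.range (μ.rowLen a)).filter fun b : ℕ =>
            (((b : ℤ) - (a : ℤ)) : ZMod e) = i).image (fun b => (a, b)) := by
      ext ⟨x, y⟩
      simp only [Finset.mem_filter, Finset.mem_image, Finset.mem_range]
      aesop
    rw [h1, Finset.card_image_of_injective _ (fun x y h => by
      simpa [Prod.ext_iff] using h)]
    rfl
  · intro x hx y hy hxy
    simp only [Finset.disjoint_left, Finset.mem_filter, Finset.mem_image]
    rintro ⟨c1, c2⟩ ⟨⟨b, -, h⟩, -⟩ ⟨⟨b', -, h'⟩, -⟩
    apply hxy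
    rw [Prod.ext_iff] at h h'
    omega

lemma card_eq_sum (μ : YoungDiagram) {N : ℕ} (hN : μ.colLen 0 ≤ N) :
    μ.card = ∑ a ∈ Finset.range N, μ.rowLen a := by
  classical
  rw [YoungDiagram.card, cells_eq μ hN, Finset.card_biUnion]
  · refine Finset.sum_congr rfl fun a _ => ?_
    rw [Finset.card_image_of_injective _ (fun x y h => by simpa [Prod.ext_iff] using h),
      Finset.card_range]
  · intro x hx y hy hxy
    simp only [Finset.disjoint_left, Finset.mem_image]
    rintro ⟨c1, c2⟩ ⟨b, -, h⟩ ⟨b', -, h'⟩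
    apply hxy
    rw [Prod.ext_iff] at h h'
    omega

lemma cast_inj_window {e : ℕ} (he : 0 < e) {s a b : ℕ} (ha : a ∈ Finset.Ico s (s + e))
    (hb : b ∈ Finset.Ico s (s + e)) (hab : (a : ZMod e) = (b : ZMod e)) : a = b := by
  simp only [Finset.mem_Ico] at ha hb
  rw [ZMod.natCast_eq_natCast_iff'] at hab
  have hm : Nat.ModEq e a b := hab
  rcases le_total a b with h | h
  · have hd : e ∣ b - a := (Nat.modEq_iff_dvd' h).mp hm
    have := Nat.eq_zero_of_dvd_of_lt hd (by omega)
    omega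
  · have hd : e ∣ a - b := (Nat.modEq_iff_dvd' h).mp hm.symm
    have := Nat.eq_zero_of_dvd_of_lt hd (by omega)
    omega

lemma card_residue {e : ℕ} (he : 0 < e) (c : ZMod e) (s : ℕ) :
    ((Finset.Ico s (s + e)).filter fun a : ℕ => (a : ZMod e) = c).card = 1 := by
  haveI : NeZero e := ⟨by omega⟩
  rw [Finset.card_eq_one]
  refine ⟨s + (c - (s : ZMod e)).val, ?_⟩
  ext a
  simp only [Finset.mem_filter, Finset.mem_Ico, Finset.mem_singleton]
  constructor
  · rintro ⟨⟨h1, h2⟩, h3⟩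
    have hv := ZMod.val_lt (c - (s : ZMod e))
    refine cast_inj_window (s := s) he (by simp only [Finset.mem_Ico]; omega)
      (by simp only [Finset.mem_Ico]; omega) ?_
    rw [h3]
    push_cast [ZMod.natCast_val, ZMod.cast_id]
    ring
  · rintro rfl
    have := ZMod.val_lt (c - (s : ZMod e))
    refine ⟨⟨by omega, by omega⟩, ?_⟩
    push_cast [ZMod.natCast_val, ZMod.cast_id]
    ring

def gg (e : ℕ) (i : ZMod e) (a l : ℕ) : ℤ := e * rcnt e i a l - l

def GG (e : ℕ) (i : ZMod e) (n l : ℕ) : ℤ := ∑ a ∈ Finset.range n, gg e i a l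

lemma rcnt_eq (e : ℕ) (i : ZMod e) (a l : ℕ) :
    rcnt e i a l = ((Finset.range l).filter fun b : ℕ => (b : ZMod e) = i + a).card := by
  unfold rcnt
  congr 1
  apply Finset.filter_congr
  intro b _
  push_cast
  rw [sub_eq_iff_eq_add, eq_comm]

lemma rcnt_le_one {e : ℕ} (he : 0 < e) (i : ZMod e) (a : ℕ) {l : ℕ} (hl : l ≤ e) :
    rcnt e i a l ≤ 1 := by
  rw [rcnt_eq]
  have h := card_residue he (i + a) 0
  rw [← h]
  apply Finset.card_le_card
  apply Finset.filter_subset_filter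
  rw [Finset.range_eq_Ico]
  exact Finset.Ico_subset_Ico le_rfl (by omega)

lemma rcnt_add {e : ℕ} (he : 0 < e) (i : ZMod e) (a l : ℕ) :
    rcnt e i a (l + e) = rcnt e i a l + 1 := by
  rw [rcnt_eq, rcnt_eq]
  have hsplit : Finset.range (l + e) = Finset.range l ∪ Finset.Ico l (l + e) := by
    simp only [Finset.range_eq_Ico]
    rw [Finset.Ico_union_Ico_eq_Ico (Nat.zero_le l) (by omega)]
  rw [hsplit, Finset.filter_union, Finset.card_union_of_disjoint, card_residue he]
  exact Finset.disjoint_filter_filter (Finset.disjoint_left.mpr (by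
    intro x hx hy
    simp only [Finset.mem_range] at hx
    simp only [Finset.mem_Ico] at hy
    omega))

lemma abs_gg_le {e : ℕ} (he : 0 < e) (i : ZMod e) (a l : ℕ) : |gg e i a l| ≤ e := by
  induction l using Nat.strong_induction_on with
  | _ l ih =>
    rcases le_or_gt l e with h | h
    · have h1 := rcnt_le_one he i a h
      rcases Nat.le_one_iff_eq_zero_or_eq_one.mp h1 with h' | h' <;>
        rw [gg, h'] <;> push_cast <;> rw [abs_le] <;> constructor <;> omega
    · have h2 : l - e + e = l := by omega
      have := rcnt_add he i a (l - e)
      rw [h2] at this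
      have hgg : gg e i a l = gg e i a (l - e) := by
        rw [gg, gg, this]
        push_cast
        have : (l : ℤ) = (l - e : ℕ) + e := by push_cast [Nat.cast_sub (by omega : e ≤ l)]; ring
        rw [this]
        ring
      rw [hgg]
      exact ih _ (by omega)

lemma rcnt_window {e : ℕ} (he : 0 < e) (i : ZMod e) (s l : ℕ) :
    ∑ a ∈ Finset.Ico s (s + e), rcnt e i a l = l := by
  have : ∀ a, rcnt e i a l
      = ∑ b ∈ Finset.range l, if (a : ZMod e) = (b : ZMod e) - i then 1 else 0 := by
    intro a
    rw [rcnt_eq, Finset.card_filter]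
    refine Finset.sum_congr rfl fun b _ => ?_
    have hiff : ((b : ZMod e) = i + a) ↔ ((a : ZMod e) = (b : ZMod e) - i) := by
      constructor <;> intro h
      · rw [h]; ring
      · rw [eq_comm, h]; ring
    simp only [hiff]
  simp only [this]
  rw [Finset.sum_comm]
  have : ∀ b, ∑ a ∈ Finset.Ico s (s + e), (if (a : ZMod e) = (b : ZMod e) - i then 1 else 0)
      = 1 := by
    intro b
    rw [← Finset.card_filter]
    exact card_residue he _ s
  simp only [this]
  simp

lemma gg_window {e : ℕ} (he : 0 < e) (i : ZMod e) (s l : ℕ) :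
    ∑ a ∈ Finset.Ico s (s + e), gg e i a l = 0 := by
  unfold gg
  rw [Finset.sum_sub_distrib, ← Finset.mul_sum]
  have h1 : ∑ a ∈ Finset.Ico s (s + e), (rcnt e i a l : ℤ) = (l : ℤ) := by
    rw [← Nat.cast_sum, rcnt_window he]
  rw [h1, Finset.sum_const, Nat.card_Ico]
  have : s + e - s = e := by omega
  rw [this]
  push_cast
  ring

lemma GG_mul {e : ℕ} (he : 0 < e) (i : ZMod e) (q l : ℕ) : GG e i (q * e) l = 0 := by
  induction q with
  | zero => simp [GG]
  | succ q ih =>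
    unfold GG at *
    rw [Finset.range_eq_Ico] at *
    have : (q + 1) * e = q * e + e := by ring
    rw [this, ← Finset.sum_Ico_consecutive _ (Nat.zero_le (q * e)) (by omega : q * e ≤ q * e + e),
      ih, gg_window he, add_zero]

lemma abs_GG_le {e : ℕ} (he : 0 < e) (i : ZMod e) (n l : ℕ) : |GG e i n l| ≤ e ^ 2 := by
  have hn : n / e * e ≤ n := Nat.div_mul_le_self n e
  have hGG : GG e i n l = ∑ a ∈ Finset.Ico (n / e * e) n, gg e i a l := by
    unfold GG
    rw [Finset.range_eq_Ico,
      ← Finset.sum_Ico_consecutive _ (Nat.zero_le (n / e * e)) hn]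
    have := GG_mul he i (n / e) l
    unfold GG at this
    rw [Finset.range_eq_Ico] at this
    rw [this, zero_add]
  rw [hGG]
  calc |∑ a ∈ Finset.Ico (n / e * e) n, gg e i a l|
      ≤ ∑ a ∈ Finset.Ico (n / e * e) n, |gg e i a l| := Finset.abs_sum_le_sum_abs _ _
    _ ≤ ∑ _a ∈ Finset.Ico (n / e * e) n, (e : ℤ) :=
        Finset.sum_le_sum fun a _ => abs_gg_le he i a l
    _ = (n - n / e * e : ℕ) * e := by rw [Finset.sum_const, Nat.card_Ico]; push_cast; ring
    _ ≤ (e : ℤ) ^ 2 := by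
        have h0 : n / e * e + n % e = n := Nat.div_add_mod' n e
        have h2 : n % e < e := Nat.mod_lt _ he
        have h1 : n - n / e * e < e := by omega
        have h3 : ((n - n / e * e : ℕ) : ℤ) < e := by exact_mod_cast h1
        nlinarith [Nat.cast_nonneg (α := ℤ) (n - n / e * e), h3,
          (by exact_mod_cast he : (0 : ℤ) < e)]

lemma sum_distinct (V : Finset ℕ) (h0 : ∀ v ∈ V, 0 < v) :
    V.card * (V.card + 1) ≤ 2 * ∑ v ∈ V, v := by
  induction V using Finset.strongInduction with
  | _ V ih =>
    rcases V.eq_empty_or_nonempty with rfl | hne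
    · simp
    · have hMV : V.max' hne ∈ V := V.max'_mem hne
      set M := V.max' hne with hM
      have hcard : V.card ≤ M := by
        have hsub : V ⊆ Finset.Icc 1 M := by
          intro v hv
          simp only [Finset.mem_Icc]
          exact ⟨h0 v hv, V.le_max' v hv⟩
        calc V.card ≤ (Finset.Icc 1 M).card := Finset.card_le_card hsub
          _ = M := by rw [Nat.card_Icc]; omega
      have herase := ih (V.erase M) (Finset.erase_ssubset hMV)
        (fun v hv => h0 v (Finset.mem_of_mem_erase hv))
      have hc : (V.erase M).card = V.card - 1 := Finset.card_erase_of_mem hMV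
      have hsum : ∑ v ∈ V, v = M + ∑ v ∈ V.erase M, v := (Finset.add_sum_erase V _ hMV).symm
      have hpos : 0 < V.card := Finset.card_pos.mpr hne
      obtain ⟨k, hk⟩ : ∃ k, V.card = k + 1 := ⟨V.card - 1, by omega⟩
      rw [hk] at hcard ⊢
      rw [hk] at hc
      simp only [Nat.add_sub_cancel] at hc
      rw [hc] at herase
      rw [hsum]
      nlinarith [herase, hcard]

lemma key (e : ℕ) (he : 0 < e) (i : ZMod e) (μ : YoungDiagram) :
    ((e : ℤ) * cNodes e i μ - μ.card) ^ 2 ≤ 16 * (e : ℤ) ^ 4 * (μ.card + 1) := by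
  classical
  set N := μ.colLen 0 with hN
  set f : ℕ → ℕ := μ.rowLen with hf
  have hsum : ((e : ℤ) * cNodes e i μ - μ.card) = ∑ a ∈ Finset.range N, gg e i a (f a) := by
    rw [cNodes_eq_sum e i μ (le_refl N), card_eq_sum μ (le_refl N)]
    push_cast
    rw [Finset.mul_sum, ← Finset.sum_sub_distrib]
    rfl
  set H : ℕ → ℤ := fun a => GG e i a (f a) with hH
  set corr : ℕ → ℤ := fun a => GG e i (a + 1) (f a) - GG e i (a + 1) (f (a + 1)) with hcorr
  have hdecomp : ∀ a, gg e i a (f a) = (H (a + 1) - H a) + corr a := by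
    intro a
    simp only [hH, hcorr, GG, Finset.sum_range_succ]
    ring
  have hS : ∑ a ∈ Finset.range N, gg e i a (f a)
      = H N + ∑ a ∈ Finset.range N, corr a := by
    calc ∑ a ∈ Finset.range N, gg e i a (f a)
        = ∑ a ∈ Finset.range N, ((H (a + 1) - H a) + corr a) :=
          Finset.sum_congr rfl fun a _ => hdecomp a
      _ = (∑ a ∈ Finset.range N, (H (a + 1) - H a)) + ∑ a ∈ Finset.range N, corr a :=
          Finset.sum_add_distrib
      _ = (H N - H 0) + ∑ a ∈ Finset.range N, corr a := by rw [Finset.sum_range_sub]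
      _ = H N + ∑ a ∈ Finset.range N, corr a := by simp [hH, GG]
  set D : Finset ℕ := (Finset.range N).filter fun a => f a ≠ f (a + 1) with hD
  have hsplit : ∑ a ∈ D, corr a = ∑ a ∈ Finset.range N, corr a := by
    apply Finset.sum_filter_of_ne
    intro a _ hc
    intro hfa
    apply hc
    rw [hcorr]
    simp [hfa]
  have hcorrabs : ∀ a, |corr a| ≤ 2 * (e : ℤ) ^ 2 := by
    intro a
    rw [hcorr]
    calc |GG e i (a + 1) (f a) - GG e i (a + 1) (f (a + 1))|
        ≤ |GG e i (a + 1) (f a)| + |GG e i (a + 1) (f (a + 1))| := abs_sub _ _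
      _ ≤ (e : ℤ) ^ 2 + (e : ℤ) ^ 2 := add_le_add (abs_GG_le he i _ _) (abs_GG_le he i _ _)
      _ = 2 * (e : ℤ) ^ 2 := by ring
  have hcorrsum : |∑ a ∈ Finset.range N, corr a| ≤ (D.card : ℤ) * (2 * (e : ℤ) ^ 2) := by
    rw [← hsplit]
    calc |∑ a ∈ D, corr a| ≤ ∑ a ∈ D, |corr a| := Finset.abs_sum_le_sum_abs _ _
      _ ≤ ∑ _a ∈ D, 2 * (e : ℤ) ^ 2 := Finset.sum_le_sum fun a _ => hcorrabs a
      _ = (D.card : ℤ) * (2 * (e : ℤ) ^ 2) := by rw [Finset.sum_const]; push_cast; ring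
  -- bound on D.card
  have hanti : ∀ a b : ℕ, a ≤ b → f b ≤ f a := fun a b hab => μ.rowLen_anti a b hab
  have hinj : Set.InjOn f D := by
    intro a ha b hb hab
    by_contra hne
    rcases Nat.lt_or_ge a b with h | h
    · have h1 : f (a + 1) < f a := by
        have := (Finset.mem_filter.mp ha).2
        have := hanti a (a + 1) (by omega)
        omega
      have h2 : f b ≤ f (a + 1) := hanti (a + 1) b (by omega)
      omega
    · have h' : b < a := by omega
      have h1 : f (b + 1) < f b := by
        have := (Finset.mem_filter.mp hb).2
        have := hanti b (b + 1) (by omega)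
        omega
      have h2 : f a ≤ f (b + 1) := hanti (b + 1) a (by omega)
      omega
  have hVcard : (D.image f).card = D.card := Finset.card_image_of_injOn hinj
  have hVpos : ∀ v ∈ D.image f, 0 < v := by
    intro v hv
    obtain ⟨a, ha, rfl⟩ := Finset.mem_image.mp hv
    have := (Finset.mem_filter.mp ha).2
    have := hanti a (a + 1) (by omega)
    omega
  have hVsum : ∑ v ∈ D.image f, v ≤ μ.card := by
    rw [Finset.sum_image hinj]
    calc ∑ a ∈ D, f a ≤ ∑ a ∈ Finset.range N, f a :=
          Finset.sum_le_sum_of_subset (Finset.filter_subset _ _)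
      _ = μ.card := (card_eq_sum μ (le_refl N)).symm
  have hDbound : D.card * (D.card + 1) ≤ 2 * μ.card := by
    have := sum_distinct (D.image f) hVpos
    rw [hVcard] at this
    omega
  -- assemble
  have habs : |(e : ℤ) * cNodes e i μ - μ.card|
      ≤ (e : ℤ) ^ 2 + (D.card : ℤ) * (2 * (e : ℤ) ^ 2) := by
    rw [hsum, hS]
    calc |H N + ∑ a ∈ Finset.range N, corr a|
        ≤ |H N| + |∑ a ∈ Finset.range N, corr a| := abs_add_le _ _
      _ ≤ (e : ℤ) ^ 2 + (D.card : ℤ) * (2 * (e : ℤ) ^ 2) :=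
          add_le_add (abs_GG_le he i _ _) hcorrsum
  set S : ℤ := (e : ℤ) * cNodes e i μ - μ.card with hSdef
  have hD2 : ((D.card : ℤ)) * ((D.card : ℤ) + 1) ≤ 2 * (μ.card : ℤ) := by exact_mod_cast hDbound
  have h1 : S ^ 2 ≤ ((e : ℤ) ^ 2 + (D.card : ℤ) * (2 * (e : ℤ) ^ 2)) ^ 2 := by
    rw [← sq_abs S]
    apply pow_le_pow_left₀ (abs_nonneg _) habs
  have hDnn : (0 : ℤ) ≤ (D.card : ℤ) := Int.natCast_nonneg _
  have hnnn : (0 : ℤ) ≤ (μ.card : ℤ) := Int.natCast_nonneg _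
  have henn : (0 : ℤ) ≤ (e : ℤ) ^ 2 := sq_nonneg _
  nlinarith [h1, hD2, hDnn, hnnn, henn, sq_nonneg ((e : ℤ) ^ 2), mul_nonneg hDnn hnnn]

/-- under the Plancherel measure `Pl_n` on partitions of `n`, `c_i(λ)/n`
converges in probability to `1/e` as `n → +∞`. -/
theorem cNodes_div_n_tendsto_inv_e (e : ℕ) (he : 2 ≤ e) (i : ZMod e) :
    ∀ ε : ℝ, 0 < ε →
      Filter.Tendsto (fun n : ℕ =>
          ∑' μ : {μ : YoungDiagram // μ.card = n ∧ ε < |(cNodes e i μ : ℝ) / n - 1 / e|},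
            plancherelN n μ.1)
        atTop (nhds 0) := by
  intro ε hε
  have he0 : 0 < e := by omega
  have heR : (0 : ℝ) < e := by exact_mod_cast he0
  set N₀ : ℕ := max 1 (Nat.ceil (32 * (e : ℝ) ^ 4 / (ε ^ 2 * (e : ℝ) ^ 2))) with hN₀
  refine Filter.Tendsto.congr' ?_ (tendsto_const_nhds (x := (0 : ℝ)))
  filter_upwards [Filter.eventually_ge_atTop N₀] with n hn
  have hn1 : 1 ≤ n := le_trans (le_max_left _ _) hn
  have hnR : (0 : ℝ) < n := by exact_mod_cast hn1
  have hn2 : 32 * (e : ℝ) ^ 4 / (ε ^ 2 * (e : ℝ) ^ 2) ≤ (n : ℝ) := by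
    calc 32 * (e : ℝ) ^ 4 / (ε ^ 2 * (e : ℝ) ^ 2)
        ≤ (Nat.ceil (32 * (e : ℝ) ^ 4 / (ε ^ 2 * (e : ℝ) ^ 2)) : ℝ) := Nat.le_ceil _
      _ ≤ (n : ℝ) := by
          have : Nat.ceil (32 * (e : ℝ) ^ 4 / (ε ^ 2 * (e : ℝ) ^ 2)) ≤ n :=
            le_trans (le_max_right _ _) hn
          exact_mod_cast this
  have hd : 32 * (e : ℝ) ^ 4 ≤ (n : ℝ) * (ε ^ 2 * (e : ℝ) ^ 2) :=
    (div_le_iff₀ (by positivity)).mp hn2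
  haveI : IsEmpty {μ : YoungDiagram // μ.card = n ∧ ε < |(cNodes e i μ : ℝ) / n - 1 / e|} := by
    constructor
    rintro ⟨μ, hcard, hdev⟩
    set c : ℕ := cNodes e i μ with hc
    have hkey := key e he0 i μ
    rw [hcard] at hkey
    have hkR : ((e : ℝ) * c - n) ^ 2 ≤ 16 * (e : ℝ) ^ 4 * ((n : ℝ) + 1) := by
      exact_mod_cast hkey
    have hform : (c : ℝ) / n - 1 / e = ((e : ℝ) * c - n) / ((e : ℝ) * n) := by
      field_simp
    rw [hform, abs_div, abs_of_pos (by positivity : (0 : ℝ) < (e : ℝ) * n)] at hdev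
    have h3 : ε * ((e : ℝ) * n) < |(e : ℝ) * c - n| :=
      (lt_div_iff₀ (by positivity)).mp hdev
    have h4 : (ε * ((e : ℝ) * n)) ^ 2 < ((e : ℝ) * c - n) ^ 2 := by
      rw [← sq_abs ((e : ℝ) * c - n)]
      exact pow_lt_pow_left₀ h3 (by positivity) two_ne_zero
    have hn1R : (1 : ℝ) ≤ n := by exact_mod_cast hn1
    nlinarith [h4, hkR, mul_le_mul_of_nonneg_right hd hnR.le,
      pow_nonneg heR.le 4, hn1R, mul_nonneg (pow_nonneg heR.le 4) hnR.le]
  exact (tsum_empty).symm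

end
end

section
/- Fix an integer e ≥ 2 and let λ be a partition. For any i ∈ {0,…,e−1}, x_i(λ) = #((eℤ_{≥0} + i) ∩ D(λ)) − #((eℤ_{<0} + i) ∩ D(λ)^c), where both cardinalities are finite; here eℤ_{≥0}+i = {ek+i : k ≥ 0}, eℤ_{<0}+i = {ek+i : k < 0}, and D(λ)^c = ℤ ∖ D(λ). -/
open MeasureTheory Filter Real

noncomputable section

namespace AuxXVar

lemma row_diff (e : ℕ) (r : ZMod e) (a ℓ : ℕ) :
    (∑ b ∈ Finset.range ℓ,
      ((if ((((b : ℤ) - (a : ℤ)) : ℤ) : ZMod e) = r then (1 : ℤ) else 0)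
        - (if ((((b : ℤ) - (a : ℤ)) : ℤ) : ZMod e) = r + 1 then (1 : ℤ) else 0)))
    = (if (((ℓ : ℤ) - (a : ℤ) - 1 : ℤ) : ZMod e) = r then (1 : ℤ) else 0)
      - (if ((-(a : ℤ) - 1 : ℤ) : ZMod e) = r then (1 : ℤ) else 0) := by
  induction ℓ with
  | zero =>
      have h0 : ((0 : ℤ) - (a : ℤ) - 1) = -(a : ℤ) - 1 := by ring
      simp [h0]
  | succ n ih =>
      rw [Finset.sum_range_succ, ih]
      have key : (((((n : ℤ) - (a : ℤ)) : ℤ) : ZMod e) = r + 1)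
          ↔ ((((n : ℤ) - (a : ℤ) - 1 : ℤ) : ZMod e) = r) := by
        constructor
        · intro h
          have h2 : (((n : ℤ) - (a : ℤ) - 1 : ℤ) : ZMod e)
              = ((((n : ℤ) - (a : ℤ)) : ℤ) : ZMod e) - 1 := by push_cast; ring
          rw [h2, h]; ring
        · intro h
          have h2 : ((((n : ℤ) - (a : ℤ)) : ℤ) : ZMod e)
              = (((n : ℤ) - (a : ℤ) - 1 : ℤ) : ZMod e) + 1 := by push_cast; ring
          rw [h2, h]
      have h3 : (((n : ℕ) + 1 : ℕ) : ℤ) - (a : ℤ) - 1 = (n : ℤ) - (a : ℤ) := by push_cast; ring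
      rw [h3, if_congr key rfl rfl]
      ring

lemma cells_decomp (μ : YoungDiagram) (M : ℕ) (hM : μ.colLen 0 ≤ M) :
    μ.cells = (Finset.range M).biUnion
      (fun a => (Finset.range (μ.rowLen a)).image (fun b => (a, b))) := by
  ext ⟨a, b⟩
  simp only [Finset.mem_biUnion, Finset.mem_range, Finset.mem_image, YoungDiagram.mem_cells]
  constructor
  · intro hab
    have hb : b < μ.rowLen a := YoungDiagram.mem_iff_lt_rowLen.mp hab
    have ha0 : (a, 0) ∈ μ := μ.up_left_mem le_rfl (Nat.zero_le b) hab
    have ha : a < μ.colLen 0 := YoungDiagram.mem_iff_lt_colLen.mp ha0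
    exact ⟨a, lt_of_lt_of_le ha hM, b, hb, rfl⟩
  · rintro ⟨a', _, b', hb', h⟩
    obtain ⟨rfl, rfl⟩ : a' = a ∧ b' = b := by simpa using h
    exact YoungDiagram.mem_iff_lt_rowLen.mpr hb'

lemma cNodes_eq (e : ℕ) (r : ZMod e) (μ : YoungDiagram) (M : ℕ) (hM : μ.colLen 0 ≤ M) :
    (cNodes e r μ : ℤ) = ∑ a ∈ Finset.range M, ∑ b ∈ Finset.range (μ.rowLen a),
      (if ((((b : ℤ) - (a : ℤ)) : ℤ) : ZMod e) = r then (1 : ℤ) else 0) := by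
  rw [cNodes, cells_decomp μ M hM, Finset.filter_biUnion]
  rw [Finset.card_biUnion]
  · push_cast
    refine Finset.sum_congr rfl fun a _ => ?_
    rw [Finset.filter_image, Finset.card_image_of_injective _
      (fun x y h => by simpa using h)]
    rw [Finset.card_filter]
    push_cast
    rfl
  · intro x _ y _ hxy
    apply Finset.disjoint_filter_filter
    simp only [Finset.disjoint_left, Finset.mem_image, Finset.mem_range]
    rintro ⟨p, q⟩ ⟨b, _, h⟩ ⟨b', _, h'⟩
    rw [Prod.mk.injEq] at h h'
    exact hxy (h.1.trans h'.1.symm)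

lemma pos_residue (e : ℕ) (he : 2 ≤ e) (i : ℕ) (hi : i < e) (d : ℤ) :
    (∃ k : ℕ, d = (e : ℤ) * k + i) ↔ (0 ≤ d ∧ ((d : ZMod e) = (i : ℕ))) := by
  haveI : NeZero e := ⟨by omega⟩
  constructor
  · rintro ⟨k, rfl⟩
    refine ⟨by positivity, ?_⟩
    push_cast
    simp [ZMod.natCast_self]
  · rintro ⟨hd, hr⟩
    have h0 : ((d - (i : ℤ) : ℤ) : ZMod e) = 0 := by push_cast [hr]; ring
    obtain ⟨k, hk⟩ := (ZMod.intCast_zmod_eq_zero_iff_dvd _ _).mp h0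
    have hk0 : 0 ≤ k := by
      by_contra hneg
      push_neg at hneg
      have : (e : ℤ) * k ≤ (e : ℤ) * (-1) :=
        mul_le_mul_of_nonneg_left (by omega) (by positivity)
      linarith [this, hk, hd, (show (i : ℤ) < e by exact_mod_cast hi)]
    refine ⟨k.toNat, ?_⟩
    rw [Int.toNat_of_nonneg hk0]
    linarith [hk]

lemma neg_residue (e : ℕ) (he : 2 ≤ e) (i : ℕ) (hi : i < e) (d : ℤ) :
    (∃ k : ℤ, k < 0 ∧ d = (e : ℤ) * k + i) ↔ (d < 0 ∧ ((d : ZMod e) = (i : ℕ))) := by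
  haveI : NeZero e := ⟨by omega⟩
  constructor
  · rintro ⟨k, hk, rfl⟩
    constructor
    · have : (e : ℤ) * k ≤ (e : ℤ) * (-1) :=
        mul_le_mul_of_nonneg_left (by omega) (by positivity)
      have hie : (i : ℤ) < e := by exact_mod_cast hi
      linarith
    · push_cast
      simp [ZMod.natCast_self]
  · rintro ⟨hd, hr⟩
    have h0 : ((d - (i : ℤ) : ℤ) : ZMod e) = 0 := by push_cast [hr]; ring
    obtain ⟨k, hk⟩ := (ZMod.intCast_zmod_eq_zero_iff_dvd _ _).mp h0
    refine ⟨k, ?_, by linarith [hk]⟩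
    by_contra hneg
    push_neg at hneg
    have : (e : ℤ) * 0 ≤ (e : ℤ) * k := mul_le_mul_of_nonneg_left hneg (by positivity)
    have hi0 : (0 : ℤ) ≤ (i : ℤ) := by positivity
    linarith [hk]

def gD (μ : YoungDiagram) (a : ℕ) : ℤ := (μ.rowLen a : ℤ) - (a : ℤ) - 1

lemma gD_strictAnti (μ : YoungDiagram) : StrictAnti (gD μ) := by
  apply strictAnti_nat_of_succ_lt
  intro n
  have := μ.rowLen_anti n (n + 1) (by omega)
  unfold gD
  push_cast
  omega

lemma mem_descents (μ : YoungDiagram) (d : ℤ) : d ∈ descents μ ↔ ∃ a : ℕ, d = gD μ a :=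
  Iff.rfl

lemma rowLen_zero (μ : YoungDiagram) (a : ℕ) (ha : μ.colLen 0 ≤ a) : μ.rowLen a = 0 := by
  by_contra h
  have : (a, 0) ∈ μ := YoungDiagram.mem_iff_lt_rowLen.mpr (by omega)
  have := YoungDiagram.mem_iff_lt_colLen.mp this
  omega

lemma gD_far (μ : YoungDiagram) (a : ℕ) (ha : μ.colLen 0 ≤ a) :
    gD μ a = -(a : ℤ) - 1 := by
  unfold gD; rw [rowLen_zero μ a ha]; push_cast; ring

lemma gD_low (μ : YoungDiagram) (a : ℕ) (ha : μ.colLen 0 ≤ a) :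
    gD μ a ≤ -(μ.colLen 0 : ℤ) - 1 := by
  have h1 : gD μ a ≤ gD μ (μ.colLen 0) := (gD_strictAnti μ).antitone ha
  rw [gD_far μ _ le_rfl] at h1
  exact h1

lemma gD_ge (μ : YoungDiagram) (a : ℕ) : -(a : ℤ) - 1 ≤ gD μ a := by
  unfold gD; omega

lemma mem_descents_low (μ : YoungDiagram) (d : ℤ) (hd : d ≤ -(μ.colLen 0 : ℤ) - 1) :
    d ∈ descents μ := by
  rw [mem_descents]
  refine ⟨(-d - 1).toNat, ?_⟩
  have h1 : ((-d - 1).toNat : ℤ) = -d - 1 := Int.toNat_of_nonneg (by omega)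
  have h2 : μ.colLen 0 ≤ (-d - 1).toNat := by omega
  rw [gD_far μ _ h2, h1]
  ring

end AuxXVar

open AuxXVar

/-- `x_i(λ) = #((eℤ_{≥0}+i) ∩ D(λ)) − #((eℤ_{<0}+i) ∩ D(λ)^c)`,
both sets being finite. -/
theorem xVar_eq_card_descents (e : ℕ) (he : 2 ≤ e) (μ : YoungDiagram) (i : ℕ) (hi : i < e) :
    ({d : ℤ | d ∈ descents μ ∧ ∃ k : ℕ, d = (e : ℤ) * k + i}).Finite ∧
    ({d : ℤ | d ∉ descents μ ∧ ∃ k : ℤ, k < 0 ∧ d = (e : ℤ) * k + i}).Finite ∧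
    xVar e (i : ZMod e) μ =
      (({d : ℤ | d ∈ descents μ ∧ ∃ k : ℕ, d = (e : ℤ) * k + i}).ncard : ℤ)
        - (({d : ℤ | d ∉ descents μ ∧ ∃ k : ℤ, k < 0 ∧ d = (e : ℤ) * k + i}).ncard : ℤ) := by

  classical
  set M := μ.colLen 0 with hMdef
  have hginj : Function.Injective (gD μ) := (gD_strictAnti μ).injective
  have hninj : Function.Injective (fun a : ℕ => -(a : ℤ) - 1) := by
    intro x y hxy
    simp only at hxy
    omega
  have hsum : xVar e (i : ZMod e) μ = ∑ a ∈ Finset.range M,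
      ((if ((gD μ a : ZMod e) = (i : ZMod e)) then (1 : ℤ) else 0)
        - (if ((-(a : ℤ) - 1 : ℤ) : ZMod e) = (i : ZMod e) then (1 : ℤ) else 0)) := by
    rw [xVar, cNodes_eq e (i : ZMod e) μ M le_rfl,
      cNodes_eq e ((i : ZMod e) + 1) μ M le_rfl, ← Finset.sum_sub_distrib]
    refine Finset.sum_congr rfl fun a _ => ?_
    rw [← Finset.sum_sub_distrib, row_diff]
    simp only [gD]
    rfl
  set A := (Finset.range M).filter
    (fun a => 0 ≤ gD μ a ∧ ((gD μ a : ZMod e) = (i : ZMod e))) with hAdef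
  set B := (Finset.range M).filter
    (fun a => gD μ a < 0 ∧ ((gD μ a : ZMod e) = (i : ZMod e))) with hBdef
  set C := (Finset.range M).filter
    (fun a : ℕ => (((-(a : ℤ) - 1 : ℤ) : ZMod e) = (i : ZMod e))) with hCdef
  have hsum2 : xVar e (i : ZMod e) μ = (A.card : ℤ) + (B.card : ℤ) - (C.card : ℤ) := by
    have hA2 : (A.card : ℤ) = ∑ a ∈ Finset.range M,
        (if (0 ≤ gD μ a ∧ ((gD μ a : ZMod e) = (i : ZMod e))) then (1 : ℤ) else 0) := by
      rw [hAdef, Finset.card_filter]; push_cast; rfl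
    have hB2 : (B.card : ℤ) = ∑ a ∈ Finset.range M,
        (if (gD μ a < 0 ∧ ((gD μ a : ZMod e) = (i : ZMod e))) then (1 : ℤ) else 0) := by
      rw [hBdef, Finset.card_filter]; push_cast; rfl
    have hC2 : (C.card : ℤ) = ∑ a ∈ Finset.range M,
        (if (((-(a : ℤ) - 1 : ℤ) : ZMod e) = (i : ZMod e)) then (1 : ℤ) else 0) := by
      rw [hCdef, Finset.card_filter]; push_cast; rfl
    rw [hsum, hA2, hB2, hC2, ← Finset.sum_add_distrib, ← Finset.sum_sub_distrib]
    refine Finset.sum_congr rfl fun a _ => ?_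
    by_cases hc : ((gD μ a : ZMod e) = (i : ZMod e))
    · rcases lt_or_ge (gD μ a) 0 with h2 | h2
      · simp [hc, h2, not_le.mpr h2]
      · simp [hc, h2, not_lt.mpr h2]
    · simp [hc]
  have hAset : ↑(A.image (gD μ))
      = {d : ℤ | d ∈ descents μ ∧ ∃ k : ℕ, d = (e : ℤ) * k + i} := by
    ext d
    simp only [Finset.coe_image, Set.mem_image, Finset.mem_coe, hAdef, Finset.mem_filter,
      Finset.mem_range, Set.mem_setOf_eq]
    rw [pos_residue e he i hi d, mem_descents]
    constructor
    · rintro ⟨a, ⟨haM, h0, hr'⟩, rfl⟩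
      exact ⟨⟨a, rfl⟩, h0, hr'⟩
    · rintro ⟨⟨a, rfl⟩, h0, hr'⟩
      refine ⟨a, ⟨?_, h0, hr'⟩, rfl⟩
      by_contra hM'
      push_neg at hM'
      have := gD_low μ a hM'
      linarith
  have hBset : ↑(B.image (gD μ))
      = {d : ℤ | d ∈ descents μ ∧ -(M : ℤ) ≤ d ∧ d < 0 ∧ ((d : ZMod e) = (i : ZMod e))} := by
    ext d
    simp only [Finset.coe_image, Set.mem_image, Finset.mem_coe, hBdef, Finset.mem_filter,
      Finset.mem_range, Set.mem_setOf_eq, mem_descents]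
    constructor
    · rintro ⟨a, ⟨haM, hneg, hr'⟩, rfl⟩
      refine ⟨⟨a, rfl⟩, ?_, hneg, hr'⟩
      have h1 := gD_ge μ a
      have h2 : (a : ℤ) < M := by exact_mod_cast haM
      linarith
    · rintro ⟨⟨a, rfl⟩, hge, hlt, hr'⟩
      refine ⟨a, ⟨?_, hlt, hr'⟩, rfl⟩
      by_contra hM'
      push_neg at hM'
      have := gD_low μ a hM'
      linarith
  have hCset : ↑(C.image (fun a : ℕ => -(a : ℤ) - 1))
      = {d : ℤ | -(M : ℤ) ≤ d ∧ d < 0 ∧ ((d : ZMod e) = (i : ZMod e))} := by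
    ext d
    simp only [Finset.coe_image, Set.mem_image, Finset.mem_coe, hCdef, Finset.mem_filter,
      Finset.mem_range, Set.mem_setOf_eq]
    constructor
    · rintro ⟨a, ⟨haM, hr'⟩, rfl⟩
      have h2 : (a : ℤ) < M := by exact_mod_cast haM
      exact ⟨by linarith, by linarith, hr'⟩
    · rintro ⟨hge, hlt, hr'⟩
      have h1 : ((-d - 1).toNat : ℤ) = -d - 1 := Int.toNat_of_nonneg (by omega)
      have h2 : (-(((-d - 1).toNat : ℕ) : ℤ) - 1) = d := by omega
      refine ⟨(-d - 1).toNat, ⟨?_, ?_⟩, h2⟩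
      · omega
      · rw [h2]; exact hr'
  have hBC : B.image (gD μ) ⊆ C.image (fun a : ℕ => -(a : ℤ) - 1) := by
    intro d hd
    have h1 : d ∈ (↑(B.image (gD μ)) : Set ℤ) := hd
    rw [hBset] at h1
    have h2 : d ∈ (↑(C.image fun a : ℕ => -(a : ℤ) - 1) : Set ℤ) := by
      rw [hCset]; exact h1.2
    exact h2
  have hSnset : ↑((C.image (fun a : ℕ => -(a : ℤ) - 1)) \ (B.image (gD μ)))
      = {d : ℤ | d ∉ descents μ ∧ ∃ k : ℤ, k < 0 ∧ d = (e : ℤ) * k + i} := by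
    rw [Finset.coe_sdiff, hBset, hCset]
    ext d
    simp only [Set.mem_diff, Set.mem_setOf_eq]
    rw [neg_residue e he i hi d]
    constructor
    · rintro ⟨⟨hge, hlt, hr'⟩, hnB⟩
      exact ⟨fun hdesc => hnB ⟨hdesc, hge, hlt, hr'⟩, hlt, hr'⟩
    · rintro ⟨hnd, hlt, hr'⟩
      have hge : -(M : ℤ) ≤ d := by
        by_contra hx
        push_neg at hx
        exact hnd (mem_descents_low μ d (by omega))
      exact ⟨⟨hge, hlt, hr'⟩, fun hx => hnd hx.1⟩
  refine ⟨?_, ?_, ?_⟩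
  · rw [← hAset]; exact (A.image (gD μ)).finite_toSet
  · rw [← hSnset]; exact ((C.image (fun a : ℕ => -(a : ℤ) - 1)) \ (B.image (gD μ))).finite_toSet
  · rw [← hAset, ← hSnset, Set.ncard_coe_finset, Set.ncard_coe_finset]
    have hle : (B.image (gD μ)).card ≤ (C.image (fun a : ℕ => -(a : ℤ) - 1)).card :=
      Finset.card_le_card hBC
    rw [Finset.card_sdiff_of_subset hBC, Finset.card_image_of_injective _ hginj]
    rw [Finset.card_image_of_injective _ hginj, Finset.card_image_of_injective _ hninj] at hle ⊢
    rw [hsum2]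
    omega


end
end

section
/- Fix t > 0. The series Σ_{m=0}^{∞} ρ^t(m) converges and Σ_{m=0}^{∞} ρ^t(m) ≤ t. -/
open MeasureTheory Filter Real

noncomputable section

namespace PPaux
open YoungDiagram Finset

/-- removable corners of a Young diagram -/
def corners (μ : YoungDiagram) : Finset (ℕ × ℕ) :=
  μ.cells.filter (fun c => (c.1 + 1, c.2) ∉ μ ∧ (c.1, c.2 + 1) ∉ μ)

lemma mem_corners {μ : YoungDiagram} {c : ℕ × ℕ} :
    c ∈ corners μ ↔ c ∈ μ ∧ (c.1 + 1, c.2) ∉ μ ∧ (c.1, c.2 + 1) ∉ μ := by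
  simp [corners]

lemma colLen_le_card (μ : YoungDiagram) (j : ℕ) : μ.colLen j ≤ μ.card := by
  rw [μ.colLen_eq_card]
  exact Finset.card_le_card (fun c hc => by
    rw [YoungDiagram.mem_col_iff] at hc; exact (mem_cells _).2 hc.1)

lemma rowLen_le_card (μ : YoungDiagram) (i : ℕ) : μ.rowLen i ≤ μ.card := by
  rw [μ.rowLen_eq_card]
  exact Finset.card_le_card (fun c hc => by
    rw [YoungDiagram.mem_row_iff] at hc; exact (mem_cells _).2 hc.1)

lemma fst_lt_card {μ : YoungDiagram} {c : ℕ × ℕ} (hc : c ∈ μ) : c.1 < μ.card :=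
  lt_of_lt_of_le (YoungDiagram.mem_iff_lt_colLen.1 (by simpa using hc)) (colLen_le_card μ _)

lemma snd_lt_card {μ : YoungDiagram} {c : ℕ × ℕ} (hc : c ∈ μ) : c.2 < μ.card :=
  lt_of_lt_of_le (YoungDiagram.mem_iff_lt_rowLen.1 (by simpa using hc)) (rowLen_le_card μ _)

/-- addable cells of a Young diagram -/
def addables (μ : YoungDiagram) : Finset (ℕ × ℕ) :=
  ((Finset.range (μ.card + 1)) ×ˢ (Finset.range (μ.card + 1))).filter
    (fun c => c ∉ μ ∧ (c.1 = 0 ∨ (c.1 - 1, c.2) ∈ μ) ∧ (c.2 = 0 ∨ (c.1, c.2 - 1) ∈ μ))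

lemma mem_addables {μ : YoungDiagram} {c : ℕ × ℕ} :
    c ∈ addables μ ↔ c ∉ μ ∧ (c.1 = 0 ∨ (c.1 - 1, c.2) ∈ μ) ∧ (c.2 = 0 ∨ (c.1, c.2 - 1) ∈ μ) := by
  constructor
  · intro h; exact (Finset.mem_filter.1 h).2
  · intro h
    refine Finset.mem_filter.2 ⟨Finset.mem_product.2 ⟨?_, ?_⟩, h⟩
    · rcases h.2.1 with h1 | h1
      · simp [h1]
      · have := fst_lt_card h1
        simp only [Finset.mem_range]
        omega
    · rcases h.2.2 with h1 | h1
      · simp [h1]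
      · have := snd_lt_card h1
        simp only [Finset.mem_range]
        omega

lemma erase_isLowerSet {μ : YoungDiagram} {c : ℕ × ℕ} (hc : c ∈ corners μ) :
    IsLowerSet ((μ.cells.erase c : Finset (ℕ × ℕ)) : Set (ℕ × ℕ)) := by
  rw [mem_corners] at hc
  intro y x hxy hy
  simp only [Finset.coe_erase, Set.mem_diff, Finset.mem_coe, mem_cells,
    Set.mem_singleton_iff] at hy ⊢
  obtain ⟨hyμ, hyc⟩ := hy
  refine ⟨μ.isLowerSet hxy hyμ, ?_⟩
  rintro rfl
  have h' := lt_of_le_of_ne hxy (Ne.symm hyc)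
  have hy' : (y.1, y.2) ∈ μ := by simpa using hyμ
  rcases Prod.lt_iff.1 h' with ⟨h1, h2⟩ | ⟨h1, h2⟩
  · exact hc.2.1 (μ.up_left_mem (by omega) h2 hy')
  · exact hc.2.2 (μ.up_left_mem h1 (by omega) hy')

lemma insert_isLowerSet {μ : YoungDiagram} {c : ℕ × ℕ} (hc : c ∈ addables μ) :
    IsLowerSet ((insert c μ.cells : Finset (ℕ × ℕ)) : Set (ℕ × ℕ)) := by
  rw [mem_addables] at hc
  intro y x hxy hy
  simp only [Finset.coe_insert, Set.mem_insert_iff, Finset.mem_coe, mem_cells] at hy ⊢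
  rcases hy with rfl | hyμ
  · -- x ≤ c
    rcases eq_or_lt_of_le hxy with rfl | hlt
    · exact Or.inl rfl
    · right
      rcases Prod.lt_iff.1 hlt with ⟨h1, h2⟩ | ⟨h1, h2⟩
      · rcases hc.2.1 with h0 | hmem
        · omega
        · exact μ.up_left_mem (by omega) h2 hmem
      · rcases hc.2.2 with h0 | hmem
        · omega
        · exact μ.up_left_mem h1 (by omega) hmem
  · exact Or.inr (μ.isLowerSet hxy hyμ)

/-- total function: erase a corner -/
def eraseC (μ : YoungDiagram) (c : ℕ × ℕ) : YoungDiagram :=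
  if hc : c ∈ corners μ then ⟨μ.cells.erase c, erase_isLowerSet hc⟩ else μ

/-- total function: insert an addable cell -/
def insertC (μ : YoungDiagram) (c : ℕ × ℕ) : YoungDiagram :=
  if hc : c ∈ addables μ then ⟨insert c μ.cells, insert_isLowerSet hc⟩ else μ

lemma mem_eraseC {μ : YoungDiagram} {c : ℕ × ℕ} (hc : c ∈ corners μ) {x : ℕ × ℕ} :
    x ∈ eraseC μ c ↔ x ≠ c ∧ x ∈ μ := by
  rw [eraseC, dif_pos hc]
  simp [Finset.mem_erase]

lemma mem_insertC {μ : YoungDiagram} {c : ℕ × ℕ} (hc : c ∈ addables μ) {x : ℕ × ℕ} :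
    x ∈ insertC μ c ↔ x = c ∨ x ∈ μ := by
  rw [insertC, dif_pos hc]
  simp [Finset.mem_insert]

lemma card_eraseC {μ : YoungDiagram} {c : ℕ × ℕ} (hc : c ∈ corners μ) :
    (eraseC μ c).card = μ.card - 1 := by
  rw [eraseC, dif_pos hc]
  have : c ∈ μ.cells := (mem_cells c).2 (mem_corners.1 hc).1
  simpa [YoungDiagram.card] using Finset.card_erase_of_mem this

lemma card_insertC {μ : YoungDiagram} {c : ℕ × ℕ} (hc : c ∈ addables μ) :
    (insertC μ c).card = μ.card + 1 := by
  rw [insertC, dif_pos hc]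
  have : c ∉ μ.cells := fun h => (mem_addables.1 hc).1 ((mem_cells c).1 h)
  simpa [YoungDiagram.card] using Finset.card_insert_of_notMem this

lemma card_pos_of_corner {μ : YoungDiagram} {c : ℕ × ℕ} (hc : c ∈ corners μ) : 0 < μ.card :=
  Finset.card_pos.2 ⟨c, (mem_cells c).2 (mem_corners.1 hc).1⟩

lemma corner_insertC {μ : YoungDiagram} {c : ℕ × ℕ} (hc : c ∈ addables μ) :
    c ∈ corners (insertC μ c) := by
  have h := mem_addables.1 hc
  rw [mem_corners]
  refine ⟨(mem_insertC hc).2 (Or.inl rfl), ?_, ?_⟩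
  · rw [mem_insertC hc]
    rintro (h1 | h1)
    · exact absurd (congrArg Prod.fst h1) (by simp)
    · exact h.1 (μ.up_left_mem (Nat.le_succ _) le_rfl h1)
  · rw [mem_insertC hc]
    rintro (h1 | h1)
    · exact absurd (congrArg Prod.snd h1) (by simp)
    · exact h.1 (μ.up_left_mem le_rfl (Nat.le_succ _) h1)

lemma addable_eraseC {μ : YoungDiagram} {c : ℕ × ℕ} (hc : c ∈ corners μ) :
    c ∈ addables (eraseC μ c) := by
  have h := mem_corners.1 hc
  rw [mem_addables]
  refine ⟨by rw [mem_eraseC hc]; simp, ?_, ?_⟩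
  · rcases Nat.eq_zero_or_pos c.1 with h0 | h0
    · exact Or.inl h0
    · right
      rw [mem_eraseC hc]
      refine ⟨?_, μ.up_left_mem (Nat.sub_le _ _) le_rfl h.1⟩
      intro heq
      have := congrArg Prod.fst heq
      simp only at this
      omega
  · rcases Nat.eq_zero_or_pos c.2 with h0 | h0
    · exact Or.inl h0
    · right
      rw [mem_eraseC hc]
      refine ⟨?_, μ.up_left_mem le_rfl (Nat.sub_le _ _) h.1⟩
      intro heq
      have := congrArg Prod.snd heq
      simp only at this
      omega

lemma insertC_eraseC {μ : YoungDiagram} {c : ℕ × ℕ} (hc : c ∈ corners μ) :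
    insertC (eraseC μ c) c = μ := by
  apply YoungDiagram.ext
  apply Finset.ext
  intro x
  rw [mem_cells, mem_cells, mem_insertC (addable_eraseC hc), mem_eraseC hc]
  constructor
  · rintro (rfl | ⟨_, h⟩)
    · exact (mem_corners.1 hc).1
    · exact h
  · intro hx
    by_cases hxc : x = c
    · exact Or.inl hxc
    · exact Or.inr ⟨hxc, hx⟩

lemma eraseC_insertC {μ : YoungDiagram} {c : ℕ × ℕ} (hc : c ∈ addables μ) :
    eraseC (insertC μ c) c = μ := by
  apply YoungDiagram.ext
  apply Finset.ext
  intro x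
  rw [mem_cells, mem_cells, mem_eraseC (corner_insertC hc), mem_insertC hc]
  constructor
  · rintro ⟨hne, rfl | h⟩
    · exact absurd rfl hne
    · exact h
  · intro hx
    exact ⟨fun h => (mem_addables.1 hc).1 (h ▸ hx), Or.inr hx⟩



def crows (μ : YoungDiagram) : Finset ℕ :=
  (Finset.range μ.card).filter (fun a => μ.rowLen (a + 1) < μ.rowLen a)

def arows (μ : YoungDiagram) : Finset ℕ :=
  (Finset.range (μ.card + 1)).filter (fun a => a = 0 ∨ μ.rowLen a < μ.rowLen (a - 1))

lemma row_pos_lt_card {μ : YoungDiagram} {a : ℕ} (h : 0 < μ.rowLen a) : a < μ.card :=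
  fst_lt_card (c := (a, 0)) (YoungDiagram.mem_iff_lt_rowLen.2 h)

lemma mem_crows {μ : YoungDiagram} {a : ℕ} :
    a ∈ crows μ ↔ μ.rowLen (a + 1) < μ.rowLen a := by
  rw [crows, Finset.mem_filter, Finset.mem_range]
  constructor
  · exact fun h => h.2
  · intro h
    exact ⟨row_pos_lt_card (by omega), h⟩

lemma mem_arows {μ : YoungDiagram} {a : ℕ} :
    a ∈ arows μ ↔ (a = 0 ∨ μ.rowLen a < μ.rowLen (a - 1)) := by
  rw [arows, Finset.mem_filter, Finset.mem_range]
  constructor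
  · exact fun h => h.2
  · rintro (rfl | h)
    · exact ⟨by omega, Or.inl rfl⟩
    · exact ⟨by have := row_pos_lt_card (μ := μ) (a := a - 1) (by omega); omega, Or.inr h⟩

lemma corners_eq (μ : YoungDiagram) :
    corners μ = (crows μ).image (fun a => (a, μ.rowLen a - 1)) := by
  apply Finset.ext
  rintro ⟨a, b⟩
  rw [Finset.mem_image, mem_corners]
  simp only [YoungDiagram.mem_iff_lt_rowLen]
  constructor
  · rintro ⟨h1, h2, h3⟩
    refine ⟨a, mem_crows.2 (by omega), ?_⟩
    have hb : μ.rowLen a - 1 = b := by omega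
    rw [hb]
  · rintro ⟨s, hs, heq⟩
    rw [mem_crows] at hs
    obtain ⟨rfl, rfl⟩ : s = a ∧ μ.rowLen s - 1 = b := by
      simpa [Prod.mk.injEq] using heq
    refine ⟨by omega, by omega, by omega⟩

lemma addables_eq (μ : YoungDiagram) :
    addables μ = (arows μ).image (fun a => (a, μ.rowLen a)) := by
  apply Finset.ext
  rintro ⟨a, b⟩
  rw [Finset.mem_image, mem_addables]
  simp only [YoungDiagram.mem_iff_lt_rowLen]
  constructor
  · rintro ⟨h1, h2, h3⟩
    have hb : b = μ.rowLen a := by omega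
    subst hb
    refine ⟨a, mem_arows.2 ?_, rfl⟩
    rcases h2 with h0 | h2
    · exact Or.inl h0
    · right; omega
  · rintro ⟨s, hs, heq⟩
    rw [mem_arows] at hs
    obtain ⟨rfl, rfl⟩ : s = a ∧ μ.rowLen s = b := by
      simpa [Prod.mk.injEq] using heq
    rcases hs with h0 | hlt
    · exact ⟨by omega, Or.inl h0, by omega⟩
    · exact ⟨by omega, Or.inr (by omega), by omega⟩

lemma arows_eq (μ : YoungDiagram) :
    arows μ = insert 0 ((crows μ).image (· + 1)) := by
  apply Finset.ext
  intro a
  rw [Finset.mem_insert, Finset.mem_image, mem_arows]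
  constructor
  · rintro (h0 | hlt)
    · exact Or.inl h0
    · rcases Nat.eq_zero_or_pos a with rfl | ha
      · exact Or.inl rfl
      · right
        refine ⟨a - 1, mem_crows.2 ?_, by omega⟩
        have : a - 1 + 1 = a := by omega
        rw [this]; exact hlt
  · rintro (rfl | ⟨s, hs, rfl⟩)
    · exact Or.inl rfl
    · rw [mem_crows] at hs
      right
      simpa using hs

lemma card_addables (μ : YoungDiagram) :
    (addables μ).card = (corners μ).card + 1 := by
  rw [addables_eq, corners_eq, arows_eq]
  rw [Finset.card_image_of_injective _ (fun x y h => congrArg Prod.fst h),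
    Finset.card_image_of_injective _ (fun x y h => congrArg Prod.fst h)]
  rw [Finset.card_insert_of_notMem (by simp)]
  rw [Finset.card_image_of_injective _ (fun x y h => by omega)]


/-! ### The exchange lemma -/

lemma exchange_mp {μ : YoungDiagram} {c c' : ℕ × ℕ} (hne : c' ≠ c)
    (hca : c ∈ addables μ) (hc' : c' ∈ corners (insertC μ c)) :
    c' ∈ corners μ ∧ c ∈ addables (eraseC μ c') := by
  obtain ⟨hm, hr, hd⟩ := mem_corners.1 hc'
  have hc'μ : c' ∈ μ := by
    rcases (mem_insertC hca).1 hm with h | h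
    · exact absurd h hne
    · exact h
  have hrμ : (c'.1 + 1, c'.2) ∉ μ := fun h => hr ((mem_insertC hca).2 (Or.inr h))
  have hdμ : (c'.1, c'.2 + 1) ∉ μ := fun h => hd ((mem_insertC hca).2 (Or.inr h))
  have hcorμ : c' ∈ corners μ := mem_corners.2 ⟨hc'μ, hrμ, hdμ⟩
  refine ⟨hcorμ, ?_⟩
  obtain ⟨hnm, h1, h2⟩ := mem_addables.1 hca
  rw [mem_addables]
  refine ⟨?_, ?_, ?_⟩
  · rw [mem_eraseC hcorμ]
    rintro ⟨-, h⟩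
    exact hnm h
  · rcases h1 with h0 | h1
    · exact Or.inl h0
    · right
      rw [mem_eraseC hcorμ]
      refine ⟨?_, h1⟩
      intro heq
      -- then (c'.1+1, c'.2) = c ∈ insertC μ c, contradiction
      obtain ⟨e1, e2⟩ := Prod.ext_iff.1 heq
      simp only at e1 e2
      have hc1 : 0 < c.1 := by
        by_contra h0
        have hc0 : c.1 = 0 := by omega
        have hcc : (c.1 - 1, c.2) = c := Prod.ext (by omega) rfl
        rw [hcc] at h1
        exact hnm h1
      apply hr
      have : (c'.1 + 1, c'.2) = c := Prod.ext (by omega) (by omega)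
      rw [this]
      exact (mem_insertC hca).2 (Or.inl rfl)
  · rcases h2 with h0 | h2
    · exact Or.inl h0
    · right
      rw [mem_eraseC hcorμ]
      refine ⟨?_, h2⟩
      intro heq
      obtain ⟨e1, e2⟩ := Prod.ext_iff.1 heq
      simp only at e1 e2
      have hc2 : 0 < c.2 := by
        by_contra h0
        have hc0 : c.2 = 0 := by omega
        have hcc : (c.1, c.2 - 1) = c := Prod.ext rfl (by omega)
        rw [hcc] at h2
        exact hnm h2
      apply hd
      have : (c'.1, c'.2 + 1) = c := Prod.ext (by omega) (by omega)
      rw [this]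
      exact (mem_insertC hca).2 (Or.inl rfl)

lemma exchange_mpr {μ : YoungDiagram} {c c' : ℕ × ℕ} (hne : c' ≠ c)
    (hcor : c' ∈ corners μ) (hca : c ∈ addables (eraseC μ c')) :
    c ∈ addables μ ∧ c' ∈ corners (insertC μ c) := by
  obtain ⟨hnm, h1, h2⟩ := mem_addables.1 hca
  obtain ⟨hc'μ, hrμ, hdμ⟩ := mem_corners.1 hcor
  have hcμ : c ∉ μ := by
    intro h
    exact hnm ((mem_eraseC hcor).2 ⟨Ne.symm hne, h⟩)
  have haμ : c ∈ addables μ := by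
    rw [mem_addables]
    refine ⟨hcμ, ?_, ?_⟩
    · rcases h1 with h0 | h1
      · exact Or.inl h0
      · exact Or.inr ((mem_eraseC hcor).1 h1).2
    · rcases h2 with h0 | h2
      · exact Or.inl h0
      · exact Or.inr ((mem_eraseC hcor).1 h2).2
  refine ⟨haμ, mem_corners.2 ⟨(mem_insertC haμ).2 (Or.inr hc'μ), ?_, ?_⟩⟩
  · rw [mem_insertC haμ]
    rintro (heq | h)
    · -- (c'.1+1, c'.2) = c
      obtain ⟨e1, e2⟩ := Prod.ext_iff.1 heq
      simp only at e1 e2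
      rcases h1 with h0 | h1
      · omega
      · have : (c.1 - 1, c.2) = c' := Prod.ext (by omega) (by omega)
        rw [this] at h1
        exact ((mem_eraseC hcor).1 h1).1 rfl
    · exact hrμ h
  · rw [mem_insertC haμ]
    rintro (heq | h)
    · obtain ⟨e1, e2⟩ := Prod.ext_iff.1 heq
      simp only at e1 e2
      rcases h2 with h0 | h2
      · omega
      · have : (c.1, c.2 - 1) = c' := Prod.ext (by omega) (by omega)
        rw [this] at h2
        exact ((mem_eraseC hcor).1 h2).1 rfl
    · exact hdμ h

lemma exchange_eq {μ : YoungDiagram} {c c' : ℕ × ℕ} (hne : c' ≠ c)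
    (hca : c ∈ addables μ) (hc' : c' ∈ corners (insertC μ c)) :
    eraseC (insertC μ c) c' = insertC (eraseC μ c') c := by
  obtain ⟨hcor, hca'⟩ := exchange_mp hne hca hc'
  apply YoungDiagram.ext
  apply Finset.ext
  intro x
  rw [mem_cells, mem_cells, mem_eraseC hc', mem_insertC hca, mem_insertC hca', mem_eraseC hcor]
  constructor
  · rintro ⟨hx, rfl | hx2⟩
    · exact Or.inl rfl
    · exact Or.inr ⟨hx, hx2⟩
  · rintro (rfl | ⟨hx, hx2⟩)
    · exact ⟨fun h => hne (h.symm), Or.inl rfl⟩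
    · exact ⟨hx, Or.inr hx2⟩

/-! ### The chain-counting function `fc` -/

def fcAux : ℕ → YoungDiagram → ℕ
  | 0, _ => 1
  | n + 1, μ => ∑ c ∈ corners μ, fcAux n (eraseC μ c)

def fc (μ : YoungDiagram) : ℕ := fcAux μ.card μ

lemma fc_card_zero {μ : YoungDiagram} (h : μ.card = 0) : fc μ = 1 := by
  rw [fc, h]; rfl

lemma fc_rec {μ : YoungDiagram} {n : ℕ} (h : μ.card = n + 1) :
    fc μ = ∑ c ∈ corners μ, fc (eraseC μ c) := by
  rw [fc, h]
  show ∑ c ∈ corners μ, fcAux n (eraseC μ c) = _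
  refine Finset.sum_congr rfl (fun c hc => ?_)
  rw [fc, card_eraseC hc, h]
  simp

lemma corners_empty_of_card_zero {μ : YoungDiagram} (h : μ.card = 0) : corners μ = ∅ := by
  have : μ.cells = ∅ := Finset.card_eq_zero.1 h
  rw [corners, this]
  rfl

/-- the `(⋆)` rearrangement -/
lemma star (μ : YoungDiagram) :
    ∑ c ∈ addables μ, fc (insertC μ c) + (corners μ).card * fc μ
      = (addables μ).card * fc μ
        + ∑ c' ∈ corners μ, ∑ c ∈ addables (eraseC μ c'), fc (insertC (eraseC μ c') c) := by
  have hL : ∀ c ∈ addables μ, fc (insertC μ c)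
      = fc μ + ∑ c' ∈ (corners (insertC μ c)).erase c, fc (eraseC (insertC μ c) c') := by
    intro c hc
    rw [fc_rec (card_insertC hc)]
    rw [← Finset.add_sum_erase _ _ (corner_insertC hc), eraseC_insertC hc]
  have hR : ∀ c' ∈ corners μ, ∑ c ∈ addables (eraseC μ c'), fc (insertC (eraseC μ c') c)
      = fc μ + ∑ c ∈ (addables (eraseC μ c')).erase c', fc (insertC (eraseC μ c') c) := by
    intro c' hc'
    rw [← Finset.add_sum_erase _ _ (addable_eraseC hc'), insertC_eraseC hc']
  rw [Finset.sum_congr rfl hL, Finset.sum_congr rfl hR]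
  rw [Finset.sum_add_distrib, Finset.sum_add_distrib, Finset.sum_const, Finset.sum_const]
  have hD : ∑ c ∈ addables μ, ∑ c' ∈ (corners (insertC μ c)).erase c, fc (eraseC (insertC μ c) c')
      = ∑ c' ∈ corners μ, ∑ c ∈ (addables (eraseC μ c')).erase c', fc (insertC (eraseC μ c') c) := by
    rw [← Finset.sum_sigma ((addables μ)) (fun c => (corners (insertC μ c)).erase c)
        (fun p => fc (eraseC (insertC μ p.1) p.2))]
    rw [← Finset.sum_sigma ((corners μ)) (fun c' => (addables (eraseC μ c')).erase c')
        (fun p => fc (insertC (eraseC μ p.1) p.2))]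
    refine Finset.sum_nbij' (fun p => ⟨p.2, p.1⟩) (fun p => ⟨p.2, p.1⟩) ?_ ?_ ?_ ?_ ?_
    · rintro ⟨c, c'⟩ hp
      rw [Finset.mem_sigma] at hp ⊢
      dsimp only at hp ⊢
      obtain ⟨h1, h2⟩ := hp
      rw [Finset.mem_erase] at h2
      obtain ⟨hcc, h2⟩ := h2
      obtain ⟨hcor, hca⟩ := exchange_mp hcc h1 h2
      exact ⟨hcor, Finset.mem_erase.2 ⟨Ne.symm hcc, hca⟩⟩
    · rintro ⟨c', c⟩ hp
      rw [Finset.mem_sigma] at hp ⊢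
      dsimp only at hp ⊢
      obtain ⟨h1, h2⟩ := hp
      rw [Finset.mem_erase] at h2
      obtain ⟨hcc, h2⟩ := h2
      obtain ⟨hca, hcor⟩ := exchange_mpr (Ne.symm hcc) h1 h2
      exact ⟨hca, Finset.mem_erase.2 ⟨Ne.symm hcc, hcor⟩⟩
    · rintro ⟨c, c'⟩ _; rfl
    · rintro ⟨c', c⟩ _; rfl
    · rintro ⟨c, c'⟩ hp
      rw [Finset.mem_sigma] at hp
      dsimp only at hp ⊢
      obtain ⟨h1, h2⟩ := hp
      rw [Finset.mem_erase] at h2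
      exact congrArg fc (exchange_eq h2.1 h1 h2.2)
  rw [hD]
  ring

/-- up-down identity: `Σ_{ν ⋗ μ} fc ν = (n+1) fc μ` -/
lemma L1 : ∀ (n : ℕ) (μ : YoungDiagram), μ.card = n →
    ∑ c ∈ addables μ, fc (insertC μ c) = (n + 1) * fc μ := by
  intro n
  induction n with
  | zero =>
    intro μ h
    have hstar := star μ
    rw [corners_empty_of_card_zero h] at hstar
    simp only [Finset.card_empty, Finset.sum_empty, zero_mul, add_zero] at hstar
    rw [hstar, card_addables μ, corners_empty_of_card_zero h]
    simp
  | succ n ih =>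
    intro μ h
    have hstar := star μ
    have hinner : ∀ c' ∈ corners μ,
        ∑ c ∈ addables (eraseC μ c'), fc (insertC (eraseC μ c') c) = (n + 1) * fc (eraseC μ c') := by
      intro c' hc'
      exact ih _ (by rw [card_eraseC hc', h]; omega)
    rw [Finset.sum_congr rfl hinner, ← Finset.mul_sum, ← fc_rec h, card_addables μ] at hstar
    apply Nat.add_right_cancel (m := (corners μ).card * fc μ)
    rw [hstar]
    ring

/-! ### Partitions of `n` as a finite set -/

instance : DecidableEq YoungDiagram :=
  fun μ ν => decidable_of_iff (μ.cells = ν.cells) ⟨YoungDiagram.ext, fun h => h ▸ rfl⟩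

private def boxEmb (n : ℕ) (μ : {μ : YoungDiagram // μ.card = n}) : Finset (Fin n × Fin n) :=
  Finset.univ.filter (fun p => ((p.1 : ℕ), (p.2 : ℕ)) ∈ μ.1)

private lemma boxEmb_inj (n : ℕ) : Function.Injective (boxEmb n) := by
  intro μ ν h
  apply Subtype.ext
  apply YoungDiagram.ext
  apply Finset.ext
  intro x
  rw [mem_cells, mem_cells]
  have key : ∀ ρ σ : {μ : YoungDiagram // μ.card = n}, boxEmb n ρ = boxEmb n σ →
      x ∈ ρ.1 → x ∈ σ.1 := by
    intro ρ σ hρσ hx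
    have h1 : x.1 < n := ρ.2 ▸ fst_lt_card hx
    have h2 : x.2 < n := ρ.2 ▸ snd_lt_card hx
    have hmem : (⟨x.1, h1⟩, ⟨x.2, h2⟩) ∈ boxEmb n ρ := by
      rw [boxEmb, Finset.mem_filter]
      exact ⟨Finset.mem_univ _, by simpa using hx⟩
    rw [hρσ, boxEmb, Finset.mem_filter] at hmem
    simpa using hmem.2
  exact ⟨key μ ν h, key ν μ h.symm⟩

noncomputable instance instFintypeYn (n : ℕ) : Fintype {μ : YoungDiagram // μ.card = n} :=
  Fintype.ofInjective (boxEmb n) (boxEmb_inj n)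

/-- the finset of Young diagrams with `n` cells -/
noncomputable def Pn (n : ℕ) : Finset YoungDiagram :=
  (Finset.univ : Finset {μ : YoungDiagram // μ.card = n}).image Subtype.val

lemma mem_Pn {n : ℕ} {μ : YoungDiagram} : μ ∈ Pn n ↔ μ.card = n := by
  rw [Pn, Finset.mem_image]
  constructor
  · rintro ⟨ν, -, rfl⟩; exact ν.2
  · intro h; exact ⟨⟨μ, h⟩, Finset.mem_univ _, rfl⟩

lemma card_zero_eq_bot {μ : YoungDiagram} (h : μ.card = 0) : μ = ⊥ :=
  YoungDiagram.ext (by simpa [YoungDiagram.cells_bot] using Finset.card_eq_zero.1 h)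

lemma Pn_zero : Pn 0 = {⊥} := by
  apply Finset.ext
  intro μ
  rw [mem_Pn, Finset.mem_singleton]
  constructor
  · exact card_zero_eq_bot
  · rintro rfl; simp [YoungDiagram.card, YoungDiagram.cells_bot]

/-- Plancherel identity: `Σ_{|λ| = n} fc(λ)² = n!` -/
lemma sum_fc_sq (n : ℕ) : ∑ μ ∈ Pn n, fc μ * fc μ = n.factorial := by
  induction n with
  | zero =>
    rw [Pn_zero, Finset.sum_singleton,
      fc_card_zero (show (⊥ : YoungDiagram).card = 0 by simp [YoungDiagram.card, YoungDiagram.cells_bot])]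
    rfl
  | succ n ih =>
    have step1 : ∑ μ ∈ Pn (n + 1), fc μ * fc μ
        = ∑ μ ∈ Pn (n + 1), ∑ c ∈ corners μ, fc μ * fc (eraseC μ c) := by
      refine Finset.sum_congr rfl (fun μ hμ => ?_)
      rw [← Finset.mul_sum, ← fc_rec (mem_Pn.1 hμ)]
    rw [step1]
    have step2 : ∑ μ ∈ Pn (n + 1), ∑ c ∈ corners μ, fc μ * fc (eraseC μ c)
        = ∑ ν ∈ Pn n, ∑ c ∈ addables ν, fc (insertC ν c) * fc ν := by
      rw [← Finset.sum_sigma (Pn (n+1)) (fun μ => corners μ) (fun p => fc p.1 * fc (eraseC p.1 p.2))]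
      rw [← Finset.sum_sigma (Pn n) (fun ν => addables ν) (fun p => fc (insertC p.1 p.2) * fc p.1)]
      refine Finset.sum_nbij' (fun p => ⟨eraseC p.1 p.2, p.2⟩) (fun p => ⟨insertC p.1 p.2, p.2⟩)
        ?_ ?_ ?_ ?_ ?_
      · rintro ⟨μ, c⟩ hp
        rw [Finset.mem_sigma] at hp ⊢
        dsimp only at hp ⊢
        exact ⟨mem_Pn.2 (by rw [card_eraseC hp.2, mem_Pn.1 hp.1]; omega), addable_eraseC hp.2⟩
      · rintro ⟨ν, c⟩ hp
        rw [Finset.mem_sigma] at hp ⊢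
        dsimp only at hp ⊢
        exact ⟨mem_Pn.2 (by rw [card_insertC hp.2, mem_Pn.1 hp.1]), corner_insertC hp.2⟩
      · rintro ⟨μ, c⟩ hp
        rw [Finset.mem_sigma] at hp
        dsimp only at hp ⊢
        rw [insertC_eraseC hp.2]
      · rintro ⟨ν, c⟩ hp
        rw [Finset.mem_sigma] at hp
        dsimp only at hp ⊢
        rw [eraseC_insertC hp.2]
      · rintro ⟨μ, c⟩ hp
        rw [Finset.mem_sigma] at hp
        dsimp only at hp ⊢
        rw [insertC_eraseC hp.2]
    rw [step2]
    have step3 : ∀ ν ∈ Pn n, ∑ c ∈ addables ν, fc (insertC ν c) * fc ν = (n + 1) * (fc ν * fc ν) := by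
      intro ν hν
      rw [← Finset.sum_mul, L1 n ν (mem_Pn.1 hν)]
      ring
    rw [Finset.sum_congr rfl step3, ← Finset.mul_sum, ih, Nat.factorial_succ]


/-! ### Standard Young tableaux: counting -/

def SYT (μ : YoungDiagram) :=
  {T : {c : ℕ × ℕ // c ∈ μ} → Fin μ.card //
    Function.Bijective T ∧
    (∀ (a b : ℕ) (h : (a, b) ∈ μ) (h' : (a + 1, b) ∈ μ),
        T ⟨(a, b), h⟩ < T ⟨(a + 1, b), h'⟩) ∧
    (∀ (a b : ℕ) (h : (a, b) ∈ μ) (h' : (a, b + 1) ∈ μ),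
        T ⟨(a, b), h⟩ < T ⟨(a, b + 1), h'⟩)}

lemma stdCount_eq_card_SYT (μ : YoungDiagram) : stdCount μ = Nat.card (SYT μ) := rfl

instance instFintypeCells (μ : YoungDiagram) : Fintype {c : ℕ × ℕ // c ∈ μ} :=
  Fintype.subtype μ.cells (fun c => mem_cells c)

instance instFiniteSYT (μ : YoungDiagram) : Finite (SYT μ) := by
  unfold SYT
  infer_instance

lemma stdCount_card_zero {μ : YoungDiagram} (h : μ.card = 0) : stdCount μ ≤ 1 := by
  rw [stdCount_eq_card_SYT]
  have : Subsingleton (SYT μ) := by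
    constructor
    intro T1 T2
    apply Subtype.ext
    funext x
    exact absurd (x.2) (by intro hx; have := fst_lt_card hx; omega)
  have hle := Nat.card_le_card_of_injective (fun _ : SYT μ => (0 : Fin 1))
    (fun a b _ => Subsingleton.elim a b)
  simpa using hle

/-- the cell carrying the largest entry -/
def topCell {μ : YoungDiagram} (h : 0 < μ.card) (T : SYT μ) : {c : ℕ × ℕ // c ∈ μ} :=
  letI : Nonempty {c : ℕ × ℕ // c ∈ μ} := by
    obtain ⟨c, hc⟩ := Finset.card_pos.1 h
    exact ⟨⟨c, hc⟩⟩
  Function.invFun T.1 ⟨μ.card - 1, by omega⟩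

lemma topCell_spec {μ : YoungDiagram} (h : 0 < μ.card) (T : SYT μ) :
    T.1 (topCell h T) = ⟨μ.card - 1, by omega⟩ := by
  letI : Nonempty {c : ℕ × ℕ // c ∈ μ} := by
    obtain ⟨c, hc⟩ := Finset.card_pos.1 h
    exact ⟨⟨c, hc⟩⟩
  unfold topCell
  exact Function.invFun_eq (T.2.1.2 _)

lemma topCell_corner {μ : YoungDiagram} (h : 0 < μ.card) (T : SYT μ) :
    (topCell h T).1 ∈ corners μ := by
  set c := topCell h T with hc
  have hspec := topCell_spec h T
  rw [mem_corners]
  refine ⟨c.2, ?_, ?_⟩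
  · intro h'
    have hmem : (c.1.1, c.1.2) ∈ μ := by
      rw [Prod.mk.eta]; exact c.2
    have hlt := T.2.2.1 c.1.1 c.1.2 hmem h'
    have hceq : (⟨(c.1.1, c.1.2), hmem⟩ : {x : ℕ × ℕ // x ∈ μ}) = c :=
      Subtype.ext (Prod.mk.eta)
    rw [hceq, hspec] at hlt
    have := (T.1 ⟨(c.1.1 + 1, c.1.2), h'⟩).isLt
    rw [Fin.lt_def] at hlt
    simp only at hlt
    omega
  · intro h'
    have hmem : (c.1.1, c.1.2) ∈ μ := by
      rw [Prod.mk.eta]; exact c.2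
    have hlt := T.2.2.2 c.1.1 c.1.2 hmem h'
    have hceq : (⟨(c.1.1, c.1.2), hmem⟩ : {x : ℕ × ℕ // x ∈ μ}) = c :=
      Subtype.ext (Prod.mk.eta)
    rw [hceq, hspec] at hlt
    have := (T.1 ⟨(c.1.1, c.1.2 + 1), h'⟩).isLt
    rw [Fin.lt_def] at hlt
    simp only at hlt
    omega

/-- restricting a tableau with top cell `cc` to the diagram minus `cc` -/
noncomputable def restr {μ : YoungDiagram} {cc : ℕ × ℕ} (hcc : cc ∈ corners μ) (h : 0 < μ.card)
    (T : SYT μ) (htop : (topCell h T).1 = cc) : SYT (eraseC μ cc) := by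
  have hcard := card_eraseC hcc
  refine ⟨fun x => ⟨(T.1 ⟨x.1, ((mem_eraseC hcc).1 x.2).2⟩).1, ?_⟩, ⟨?_, ?_⟩, ?_, ?_⟩
  · -- bound
    set y : {c : ℕ × ℕ // c ∈ μ} := ⟨x.1, ((mem_eraseC hcc).1 x.2).2⟩ with hy
    have hxne : x.1 ≠ cc := ((mem_eraseC hcc).1 x.2).1
    have hlt : (T.1 y).1 < μ.card := (T.1 y).isLt
    have hne : (T.1 y).1 ≠ μ.card - 1 := by
      intro heq
      have h1 : T.1 y = T.1 (topCell h T) := by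
        rw [topCell_spec h T]
        exact Fin.ext heq
      have h2 := T.2.1.1 h1
      exact hxne ((congrArg Subtype.val h2).trans htop)
    omega
  · -- injective
    intro a b hab
    dsimp only at hab
    rw [Fin.mk.injEq] at hab
    have h2 := T.2.1.1 (Fin.ext hab)
    have h3 := congrArg Subtype.val h2
    exact Subtype.ext h3
  · -- surjective
    intro k
    have hk : k.1 < μ.card - 1 := by have := k.isLt; omega
    obtain ⟨y, hy⟩ := T.2.1.2 ⟨k.1, by omega⟩
    have hyne : y.1 ≠ cc := by
      intro heq
      have h1 : y = topCell h T := Subtype.ext (heq.trans htop.symm)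
      rw [h1, topCell_spec h T] at hy
      have := congrArg Fin.val hy
      simp only at this
      omega
    refine ⟨⟨y.1, (mem_eraseC hcc).2 ⟨hyne, y.2⟩⟩, ?_⟩
    apply Fin.ext
    show (T.1 ⟨y.1, _⟩).1 = k.1
    have : (⟨y.1, ((mem_eraseC hcc).1 ((mem_eraseC hcc).2 ⟨hyne, y.2⟩)).2⟩ : {c : ℕ × ℕ // c ∈ μ}) = y :=
      Subtype.ext rfl
    rw [this, hy]
  · -- rows
    intro a b hab hab'
    rw [Fin.lt_def]
    exact T.2.2.1 a b ((mem_eraseC hcc).1 hab).2 ((mem_eraseC hcc).1 hab').2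
  · -- cols
    intro a b hab hab'
    rw [Fin.lt_def]
    exact T.2.2.2 a b ((mem_eraseC hcc).1 hab).2 ((mem_eraseC hcc).1 hab').2

lemma restr_apply_val {μ : YoungDiagram} {cc : ℕ × ℕ} (hcc : cc ∈ corners μ) (h : 0 < μ.card)
    (T : SYT μ) (htop : (topCell h T).1 = cc) (x : {x : ℕ × ℕ // x ∈ eraseC μ cc}) :
    ((restr hcc h T htop).1 x).1 = (T.1 ⟨x.1, ((mem_eraseC hcc).1 x.2).2⟩).1 := rfl

/-- the top corner of a tableau -/
noncomputable def topCorner {μ : YoungDiagram} (h : 0 < μ.card) (T : SYT μ) :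
    {c : ℕ × ℕ // c ∈ corners μ} :=
  ⟨(topCell h T).1, topCell_corner h T⟩

noncomputable def fiberMap {μ : YoungDiagram} (h : 0 < μ.card) (c : {c : ℕ × ℕ // c ∈ corners μ}) :
    {T : SYT μ // topCorner h T = c} → SYT (eraseC μ c.1) :=
  fun p => restr c.2 h p.1 (congrArg Subtype.val p.2)

lemma fiberMap_injective {μ : YoungDiagram} (h : 0 < μ.card) (c : {c : ℕ × ℕ // c ∈ corners μ}) :
    Function.Injective (fiberMap h c) := by
  intro p q hpq
  apply Subtype.ext
  apply Subtype.ext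
  funext x
  by_cases hx : x.1 = c.1
  · have hp : x = topCell h p.1 := Subtype.ext (hx.trans (congrArg Subtype.val p.2).symm)
    have hq : x = topCell h q.1 := Subtype.ext (hx.trans (congrArg Subtype.val q.2).symm)
    have e1 : p.1.1 x = (⟨μ.card - 1, by omega⟩ : Fin μ.card) := by
      rw [hp]; exact topCell_spec h p.1
    have e2 : q.1.1 x = (⟨μ.card - 1, by omega⟩ : Fin μ.card) := by
      rw [hq]; exact topCell_spec h q.1
    exact e1.trans e2.symm
  · have hxm : x.1 ∈ eraseC μ c.1 := (mem_eraseC c.2).2 ⟨hx, x.2⟩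
    have h1 := congrFun (congrArg Subtype.val hpq) ⟨x.1, hxm⟩
    have hxx : (⟨x.1, ((mem_eraseC c.2).1 hxm).2⟩ : {c : ℕ × ℕ // c ∈ μ}) = x := Subtype.ext rfl
    have h2 : (p.1.1 ⟨x.1, ((mem_eraseC c.2).1 hxm).2⟩).1
        = (q.1.1 ⟨x.1, ((mem_eraseC c.2).1 hxm).2⟩).1 := by
      have h3 := congrArg Fin.val h1
      exact h3
    apply Fin.ext
    rw [← hxx]
    exact h2


noncomputable local instance (μ : YoungDiagram) : Fintype (SYT μ) := Fintype.ofFinite _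

lemma stdCount_rec_le {μ : YoungDiagram} (h : 0 < μ.card) :
    stdCount μ ≤ ∑ c ∈ corners μ, stdCount (eraseC μ c) := by
  classical
  rw [stdCount_eq_card_SYT]
  have e1 : Nat.card (SYT μ)
      = Nat.card (Σ c : {c : ℕ × ℕ // c ∈ corners μ}, {T : SYT μ // topCorner h T = c}) :=
    (Nat.card_congr (Equiv.sigmaFiberEquiv (topCorner h))).symm
  rw [e1]
  rw [Nat.card_eq_fintype_card, Fintype.card_sigma]
  have e2 : ∀ c : {c : ℕ × ℕ // c ∈ corners μ},
      Fintype.card {T : SYT μ // topCorner h T = c} ≤ stdCount (eraseC μ c.1) := by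
    intro c
    rw [stdCount_eq_card_SYT, ← Nat.card_eq_fintype_card]
    exact Nat.card_le_card_of_injective (fiberMap h c) (fiberMap_injective h c)
  calc ∑ c : {c : ℕ × ℕ // c ∈ corners μ}, Fintype.card {T : SYT μ // topCorner h T = c}
      ≤ ∑ c : {c : ℕ × ℕ // c ∈ corners μ}, stdCount (eraseC μ c.1) :=
        Finset.sum_le_sum (fun c _ => e2 c)
    _ = ∑ c ∈ corners μ, stdCount (eraseC μ c) := Finset.sum_coe_sort (corners μ) (fun c => stdCount (eraseC μ c))

lemma stdCount_le_fc (μ : YoungDiagram) : stdCount μ ≤ fc μ := by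
  generalize hn : μ.card = n
  induction n generalizing μ with
  | zero => rw [fc_card_zero hn]; exact stdCount_card_zero hn
  | succ n ih =>
    calc stdCount μ ≤ ∑ c ∈ corners μ, stdCount (eraseC μ c) := stdCount_rec_le (by omega)
      _ ≤ ∑ c ∈ corners μ, fc (eraseC μ c) :=
          Finset.sum_le_sum (fun c hc => ih _ (by rw [card_eraseC hc, hn]; omega))
      _ = fc μ := (fc_rec hn).symm

lemma sum_stdCount_sq_le (n : ℕ) :
    ∑ μ ∈ Pn n, stdCount μ * stdCount μ ≤ n.factorial := by
  calc ∑ μ ∈ Pn n, stdCount μ * stdCount μ ≤ ∑ μ ∈ Pn n, fc μ * fc μ :=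
        Finset.sum_le_sum (fun μ _ => Nat.mul_le_mul (stdCount_le_fc μ) (stdCount_le_fc μ))
    _ = n.factorial := sum_fc_sq n


/-! ### Analytic facts -/

lemma exp_tsum (t : ℝ) : Real.exp t = ∑' n : ℕ, t ^ n / n.factorial := by
  rw [Real.exp_eq_exp_ℝ, NormedSpace.exp_eq_tsum_div]

lemma summable_n_pow_div_fact (t : ℝ) :
    Summable (fun n : ℕ => (n : ℝ) * t ^ n / n.factorial) := by
  apply (summable_nat_add_iff 1).1
  have heq : (fun n : ℕ => ((n + 1 : ℕ) : ℝ) * t ^ (n + 1) / (n + 1).factorial)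
      = fun n : ℕ => t * (t ^ n / n.factorial) := by
    funext n
    rw [Nat.factorial_succ]
    push_cast
    have hn : ((n : ℝ) + 1) ≠ 0 := by positivity
    have hf : ((n.factorial : ℝ)) ≠ 0 := by positivity
    field_simp
    ring
  rw [heq]
  exact (Real.summable_pow_div_factorial t).mul_left t

lemma tsum_n_pow_div_fact (t : ℝ) :
    ∑' n : ℕ, (n : ℝ) * t ^ n / n.factorial = t * Real.exp t := by
  rw [(summable_n_pow_div_fact t).tsum_eq_zero_add]
  have h1 : ∑' n : ℕ, ((n + 1 : ℕ) : ℝ) * t ^ (n + 1) / (n + 1).factorial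
      = ∑' n : ℕ, t * (t ^ n / n.factorial) := by
    refine tsum_congr (fun n => ?_)
    rw [Nat.factorial_succ]
    push_cast
    have hn : ((n : ℝ) + 1) ≠ 0 := by positivity
    have hf : ((n.factorial : ℝ)) ≠ 0 := by positivity
    field_simp
    ring
  simp only [Nat.cast_zero, zero_mul, zero_div, zero_add]
  rw [h1, tsum_mul_left, ← exp_tsum]

lemma pl_nonneg {t : ℝ} (ht : 0 ≤ t) (μ : YoungDiagram) : 0 ≤ plancherelP t μ := by
  unfold plancherelP
  positivity

lemma sum_Pn {M : Type*} [AddCommMonoid M] (g : YoungDiagram → M) (n : ℕ) :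
    ∑ μ' : {μ : YoungDiagram // μ.card = n}, g μ'.1 = ∑ μ ∈ Pn n, g μ := by
  rw [Pn, Finset.sum_image (fun x _ y _ h => Subtype.ext h)]

lemma fiber_bound {t : ℝ} (ht : 0 < t) (n : ℕ) :
    ∑ μ ∈ Pn n, plancherelP t μ ≤ Real.exp (-t) * t ^ n / n.factorial := by
  have hfac : (0 : ℝ) < (n.factorial : ℝ) := by positivity
  have h1 : ∑ μ ∈ Pn n, plancherelP t μ
      = Real.exp (-t) * t ^ n * ((∑ μ ∈ Pn n, (stdCount μ * stdCount μ : ℕ)) / ((n.factorial : ℝ) * n.factorial)) := by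
    push_cast
    rw [Finset.sum_div, Finset.mul_sum]
    refine Finset.sum_congr rfl (fun μ hμ => ?_)
    unfold plancherelP
    rw [mem_Pn.1 hμ]
    field_simp
  rw [h1]
  have h2 : ((∑ μ ∈ Pn n, (stdCount μ * stdCount μ : ℕ) : ℕ) : ℝ) ≤ (n.factorial : ℝ) := by
    exact_mod_cast sum_stdCount_sq_le n
  have h3 : ((∑ μ ∈ Pn n, (stdCount μ * stdCount μ : ℕ)) : ℝ) / ((n.factorial : ℝ) * n.factorial)
      ≤ 1 / n.factorial := by
    rw [div_le_div_iff₀ (by positivity) hfac]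
    calc ((∑ μ ∈ Pn n, (stdCount μ * stdCount μ : ℕ)) : ℝ) * n.factorial
        ≤ (n.factorial : ℝ) * n.factorial := by
          apply mul_le_mul_of_nonneg_right _ hfac.le
          push_cast at h2 ⊢
          exact h2
      _ = 1 * ((n.factorial : ℝ) * n.factorial) := by ring
  calc Real.exp (-t) * t ^ n * ((∑ μ ∈ Pn n, (stdCount μ * stdCount μ : ℕ)) / ((n.factorial : ℝ) * n.factorial))
      ≤ Real.exp (-t) * t ^ n * (1 / n.factorial) := by
        apply mul_le_mul_of_nonneg_left _ (by positivity)
        push_cast at h3 ⊢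
        exact h3
    _ = Real.exp (-t) * t ^ n / n.factorial := by ring


/-! ### The ENNReal master bound -/

open scoped ENNReal

lemma key2 {t : ℝ} (ht : 0 < t) :
    ∑' μ : YoungDiagram, (μ.card : ℝ≥0∞) * ENNReal.ofReal (plancherelP t μ)
      ≤ ENNReal.ofReal t := by
  classical
  set g : YoungDiagram → ℝ≥0∞ := fun μ => (μ.card : ℝ≥0∞) * ENNReal.ofReal (plancherelP t μ)
    with hg
  let e : (Σ n : ℕ, {μ : YoungDiagram // μ.card = n}) ≃ YoungDiagram :=
    Equiv.sigmaFiberEquiv (fun μ : YoungDiagram => μ.card)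
  rw [← Equiv.tsum_eq e g]
  have hb : ∑' x : (Σ n : ℕ, {μ : YoungDiagram // μ.card = n}), g (e x)
      = ∑' x : (Σ n : ℕ, {μ : YoungDiagram // μ.card = n}), g x.2.1 :=
    tsum_congr (fun x => rfl)
  rw [hb, ENNReal.tsum_sigma (fun n (μ' : {μ : YoungDiagram // μ.card = n}) => g μ'.1)]
  have hfib : ∀ n : ℕ, (∑' μ' : {μ : YoungDiagram // μ.card = n}, g μ'.1)
      ≤ ENNReal.ofReal ((n : ℝ) * (Real.exp (-t) * t ^ n / n.factorial)) := by
    intro n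
    rw [tsum_fintype, sum_Pn (M := ℝ≥0∞) g n]
    have h1 : ∀ μ ∈ Pn n, g μ = ENNReal.ofReal ((n : ℝ) * plancherelP t μ) := by
      intro μ hμ
      rw [hg]
      dsimp only
      rw [ENNReal.ofReal_mul (by positivity : (0:ℝ) ≤ (n:ℝ)), ENNReal.ofReal_natCast,
        mem_Pn.1 hμ]
    rw [Finset.sum_congr rfl h1,
      ← ENNReal.ofReal_sum_of_nonneg
        (fun μ _ => mul_nonneg (Nat.cast_nonneg n) (pl_nonneg ht.le μ))]
    apply ENNReal.ofReal_le_ofReal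
    rw [← Finset.mul_sum]
    exact mul_le_mul_of_nonneg_left (fiber_bound ht n) (Nat.cast_nonneg n)
  refine le_trans (ENNReal.tsum_le_tsum hfib) ?_
  have hfun : (fun n : ℕ => (n : ℝ) * (Real.exp (-t) * t ^ n / n.factorial))
      = fun n : ℕ => Real.exp (-t) * ((n : ℝ) * t ^ n / n.factorial) := by
    funext n; ring
  have hsummable : Summable (fun n : ℕ => (n : ℝ) * (Real.exp (-t) * t ^ n / n.factorial)) := by
    rw [hfun]
    exact (summable_n_pow_div_fact t).mul_left _
  rw [← ENNReal.ofReal_tsum_of_nonneg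
    (fun n => mul_nonneg (Nat.cast_nonneg n) (by positivity)) hsummable]
  apply ENNReal.ofReal_le_ofReal
  rw [hfun, tsum_mul_left, tsum_n_pow_div_fact, Real.exp_neg]
  have hexp : Real.exp t ≠ 0 := Real.exp_ne_zero t
  field_simp
  exact le_rfl

/-! ### Descents -/

lemma descent_lt_card {μ : YoungDiagram} {m : ℕ} (h : (m : ℤ) ∈ descents μ) : m < μ.card := by
  obtain ⟨a, ha⟩ := h
  have h1 : (μ.rowLen a : ℤ) = (m : ℤ) + a + 1 := by omega
  have h2 : μ.rowLen a = m + a + 1 := by exact_mod_cast h1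
  have h3 := rowLen_le_card μ a
  omega

noncomputable def FE (t : ℝ) (m : ℕ) : ℝ≥0∞ :=
  ∑' μ : {μ : YoungDiagram // (m : ℤ) ∈ descents μ}, ENNReal.ofReal (plancherelP t μ.1)

lemma FE_eq (t : ℝ) (m : ℕ) :
    FE t m = ∑' μ : YoungDiagram,
      Set.indicator {μ' : YoungDiagram | (m : ℤ) ∈ descents μ'}
        (fun μ' => ENNReal.ofReal (plancherelP t μ')) μ := by
  rw [FE]
  exact _root_.tsum_subtype {μ' : YoungDiagram | (m : ℤ) ∈ descents μ'}
    (fun μ' => ENNReal.ofReal (plancherelP t μ'))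

lemma rho_eq_toReal {t : ℝ} (ht : 0 < t) (m : ℕ) : rho t (m : ℤ) = (FE t m).toReal := by
  rw [rho, FE, ENNReal.tsum_toReal_eq (fun _ => ENNReal.ofReal_ne_top)]
  exact tsum_congr (fun μ => (ENNReal.toReal_ofReal (pl_nonneg ht.le μ.1)).symm)

lemma tsum_FE_le {t : ℝ} (ht : 0 < t) : ∑' m : ℕ, FE t m ≤ ENNReal.ofReal t := by
  classical
  have h1 : ∑' m : ℕ, FE t m
      = ∑' (μ : YoungDiagram) (m : ℕ),
          Set.indicator {μ' : YoungDiagram | (m : ℤ) ∈ descents μ'}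
            (fun μ' => ENNReal.ofReal (plancherelP t μ')) μ := by
    rw [← ENNReal.tsum_comm]
    exact tsum_congr (fun m => FE_eq t m)
  rw [h1]
  refine le_trans (ENNReal.tsum_le_tsum (fun μ => ?_)) (key2 ht)
  -- inner : ∑' m, indicator ≤ card μ * ofReal Pl
  have hvan : ∀ m ∉ Finset.range μ.card,
      Set.indicator {μ' : YoungDiagram | (m : ℤ) ∈ descents μ'}
        (fun μ' => ENNReal.ofReal (plancherelP t μ')) μ = 0 := by
    intro m hm
    rw [Finset.mem_range] at hm
    apply Set.indicator_of_notMem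
    intro hd
    exact hm (descent_lt_card hd)
  rw [tsum_eq_sum hvan]
  calc ∑ m ∈ Finset.range μ.card,
        Set.indicator {μ' : YoungDiagram | (m : ℤ) ∈ descents μ'}
          (fun μ' => ENNReal.ofReal (plancherelP t μ')) μ
      ≤ ∑ _m ∈ Finset.range μ.card, ENNReal.ofReal (plancherelP t μ) := by
        refine Finset.sum_le_sum (fun m _ => ?_)
        rw [Set.indicator_apply]
        split_ifs
        · exact le_rfl
        · exact zero_le
    _ = (μ.card : ℝ≥0∞) * ENNReal.ofReal (plancherelP t μ) := by
        rw [Finset.sum_const, Finset.card_range, nsmul_eq_mul]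

end PPaux

/-- the series `Σ_{m≥0} ρ^t(m)` converges and is at most `t`. -/
theorem summable_rho_and_tsum_le (t : ℝ) (ht : 0 < t) :
    Summable (fun m : ℕ => rho t (m : ℤ)) ∧ ∑' m : ℕ, rho t (m : ℤ) ≤ t := by
  have hΦ := PPaux.tsum_FE_le ht
  have hne : ∑' m : ℕ, PPaux.FE t m ≠ ⊤ :=
    ne_top_of_le_ne_top ENNReal.ofReal_ne_top hΦ
  have hFEne : ∀ m : ℕ, PPaux.FE t m ≠ ⊤ :=
    fun m => ne_top_of_le_ne_top hne (ENNReal.le_tsum m)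
  have heq : (fun m : ℕ => rho t (m : ℤ)) = fun m => (PPaux.FE t m).toReal := by
    funext m
    exact PPaux.rho_eq_toReal ht m
  constructor
  · rw [heq]
    exact ENNReal.summable_toReal hne
  · rw [heq, ← ENNReal.tsum_toReal_eq hFEne]
    calc (∑' m : ℕ, PPaux.FE t m).toReal ≤ (ENNReal.ofReal t).toReal :=
          ENNReal.toReal_mono ENNReal.ofReal_ne_top hΦ
      _ = t := ENNReal.toReal_ofReal ht.le

end
end

section
/- Let ε ≥ 1 be an integer, k ∈ ℤ, and x, t ∈ ℝ. With Ω_ε = {2ℓπ/ε : −⌈ε/2⌉ < ℓ ≤ ⌊ε/2⌋}, one has Σ_{m∈εℤ+k} J_m(x)·exp(imt) = (1/ε)·Σ_{ω∈Ω_ε} exp(i(−kω + x·sin(ω+t))), where the series on the left converges absolutely (the sum ranges over all m ∈ ℤ with m ≡ k mod ε) and i denotes the imaginary unit. -/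
open MeasureTheory Filter Real

noncomputable section

def besselAux (a : ℕ) (x : ℝ) : ℝ :=
  ∑' k : ℕ, (-1 : ℝ) ^ k * (x / 2) ^ (a + 2 * k) /
      (Nat.factorial k * Nat.factorial (a + k))

lemma besselJ_eq (n : ℤ) (x : ℝ) :
    besselJ n x = (-1 : ℝ) ^ ((-n).toNat) * besselAux n.natAbs x := by
  unfold besselJ besselAux
  rcases le_or_gt 0 n with h | h
  · rw [if_pos h]
    have h1 : (-n).toNat = 0 := by omega
    have h2 : n.natAbs = n.toNat := by omega
    rw [h1, h2, pow_zero, one_mul]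
  · rw [if_neg (by omega)]
    have h1 : (-n).toNat = n.natAbs := by omega
    rw [h1]

lemma besselAux_term_bound (a : ℕ) (x : ℝ) (k : ℕ) :
    |(-1 : ℝ) ^ k * (x / 2) ^ (a + 2 * k) /
      (Nat.factorial k * Nat.factorial (a + k))|
    ≤ (|x| / 2) ^ a / a.factorial * (((x / 2) ^ 2) ^ k / k.factorial) := by
  rw [abs_div, abs_mul, abs_pow, abs_pow, abs_neg, abs_one, one_pow, one_mul]
  have hx : |x / 2| = |x| / 2 := by rw [abs_div]; norm_num
  have h2 : (|x| / 2) ^ 2 = (x / 2) ^ 2 := by rw [div_pow, div_pow, sq_abs]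
  rw [hx, pow_add, pow_mul, h2,
    abs_of_nonneg (by positivity : (0:ℝ) ≤ (Nat.factorial k : ℝ) * Nat.factorial (a + k))]
  have hd : (Nat.factorial a : ℝ) * Nat.factorial k ≤ (Nat.factorial k : ℝ) * Nat.factorial (a + k) := by
    rw [mul_comm]
    have := Nat.factorial_le (show a ≤ a + k by omega)
    exact_mod_cast Nat.mul_le_mul_left _ this
  have key := div_le_div_of_nonneg_left
    (show (0:ℝ) ≤ (|x|/2)^a * ((x/2)^2)^k by positivity)
    (show (0:ℝ) < (Nat.factorial a : ℝ) * Nat.factorial k by positivity) hd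
  calc (|x|/2)^a * ((x/2)^2)^k / ((Nat.factorial k : ℝ) * Nat.factorial (a + k))
      ≤ (|x|/2)^a * ((x/2)^2)^k / ((Nat.factorial a : ℝ) * Nat.factorial k) := key
    _ = (|x| / 2) ^ a / a.factorial * (((x / 2) ^ 2) ^ k / k.factorial) := by ring

lemma besselAux_summable_abs (a : ℕ) (x : ℝ) :
    Summable (fun k : ℕ => |(-1 : ℝ) ^ k * (x / 2) ^ (a + 2 * k) /
      (Nat.factorial k * Nat.factorial (a + k))|) :=
  Summable.of_nonneg_of_le (fun _ => abs_nonneg _) (besselAux_term_bound a x)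
    ((Real.summable_pow_div_factorial ((x/2)^2)).mul_left _)

lemma besselAux_summable (a : ℕ) (x : ℝ) :
    Summable (fun k : ℕ => (-1 : ℝ) ^ k * (x / 2) ^ (a + 2 * k) /
      (Nat.factorial k * Nat.factorial (a + k))) :=
  (besselAux_summable_abs a x).of_abs

lemma besselAux_bound (a : ℕ) (x : ℝ) :
    |besselAux a x| ≤ (|x| / 2) ^ a / a.factorial * Real.exp ((x / 2) ^ 2) := by
  have h1 : |besselAux a x| ≤ ∑' k : ℕ, |(-1 : ℝ) ^ k * (x / 2) ^ (a + 2 * k) /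
      (Nat.factorial k * Nat.factorial (a + k))| := by
    have hs : Summable (fun k : ℕ => ‖(-1 : ℝ) ^ k * (x / 2) ^ (a + 2 * k) /
        (Nat.factorial k * Nat.factorial (a + k))‖) := by
      simp only [Real.norm_eq_abs]; exact besselAux_summable_abs a x
    have := norm_tsum_le_tsum_norm hs
    simp only [Real.norm_eq_abs] at this
    exact this
  have h2 : ∑' k : ℕ, |(-1 : ℝ) ^ k * (x / 2) ^ (a + 2 * k) /
      (Nat.factorial k * Nat.factorial (a + k))|
      ≤ ∑' k : ℕ, (|x| / 2) ^ a / a.factorial * (((x / 2) ^ 2) ^ k / k.factorial) :=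
    (besselAux_summable_abs a x).tsum_le_tsum (besselAux_term_bound a x)
      ((Real.summable_pow_div_factorial ((x/2)^2)).mul_left _)
  have h3 : ∑' k : ℕ, (|x| / 2) ^ a / a.factorial * (((x / 2) ^ 2) ^ k / k.factorial)
      = (|x| / 2) ^ a / a.factorial * Real.exp ((x / 2) ^ 2) := by
    rw [tsum_mul_left, Real.exp_eq_exp_ℝ, NormedSpace.exp_eq_tsum_div]
  linarith [h3 ▸ h2]

lemma besselJ_bound (n : ℤ) (x : ℝ) :
    |besselJ n x| ≤ (|x| / 2) ^ n.natAbs / n.natAbs.factorial * Real.exp ((x / 2) ^ 2) := by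
  rw [besselJ_eq, abs_mul, abs_pow, abs_neg, abs_one, one_pow, one_mul]
  exact besselAux_bound _ x


lemma summable_abs_besselJ (x : ℝ) : Summable (fun n : ℤ => |besselJ n x|) := by
  apply Summable.of_nonneg_of_le (fun _ => abs_nonneg _) (besselJ_bound · x)
  apply Summable.of_nat_of_neg
  · simpa using ((Real.summable_pow_div_factorial (|x|/2)).mul_right (Real.exp ((x/2)^2)))
  · simpa using ((Real.summable_pow_div_factorial (|x|/2)).mul_right (Real.exp ((x/2)^2)))

def pairEquiv : ℤ × ℕ ≃ ℕ × ℕ where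
  toFun p := (p.2 + p.1.toNat, p.2 + (-p.1).toNat)
  invFun q := ((q.1 : ℤ) - q.2, min q.1 q.2)
  left_inv p := by
    obtain ⟨n, m⟩ := p
    simp only [Prod.mk.injEq]
    constructor <;> [skip; omega]
    push_cast; omega
  right_inv q := by
    obtain ⟨j, k⟩ := q
    simp only [Prod.mk.injEq]
    constructor <;> omega

lemma inner_eval (x : ℝ) (z : ℂ) (hz : z ≠ 0) (n : ℤ) :
    ∑' m : ℕ, (((x/2 : ℝ) : ℂ) * z) ^ (m + n.toNat) / (Nat.factorial (m + n.toNat)) *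
      ((-((x/2 : ℝ) : ℂ) * z⁻¹) ^ (m + (-n).toNat) / (Nat.factorial (m + (-n).toNat)))
    = (besselJ n x : ℂ) * z ^ (n : ℤ) := by
  have key : ∀ m : ℕ, (((x/2 : ℝ) : ℂ) * z) ^ (m + n.toNat) / (Nat.factorial (m + n.toNat)) *
      ((-((x/2 : ℝ) : ℂ) * z⁻¹) ^ (m + (-n).toNat) / (Nat.factorial (m + (-n).toNat)))
      = (-1 : ℂ) ^ ((-n).toNat) *
        (((-1 : ℝ) ^ m * (x / 2) ^ (n.natAbs + 2 * m) /
          (Nat.factorial m * Nat.factorial (n.natAbs + m)) : ℝ) : ℂ) * z ^ (n : ℤ) := by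
    intro m
    have hzz : z ^ (m + n.toNat) * (z⁻¹) ^ (m + (-n).toNat) = z ^ (n : ℤ) := by
      rw [inv_pow, ← zpow_natCast z (m + n.toNat), ← zpow_natCast z (m + (-n).toNat),
        ← zpow_neg, ← zpow_add₀ hz]
      congr 1
      omega
    have hfac : ((m + n.toNat).factorial * (m + (-n).toNat).factorial : ℕ)
        = Nat.factorial m * Nat.factorial (n.natAbs + m) := by
      rcases le_or_gt 0 n with h | h
      · have h1 : (-n).toNat = 0 := by omega
        have h2 : m + n.toNat = n.natAbs + m := by omega
        rw [h1, h2, add_zero, Nat.mul_comm]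
      · have h1 : n.toNat = 0 := by omega
        have h2 : m + (-n).toNat = n.natAbs + m := by omega
        rw [h1, h2, add_zero]
    have hfacC : ((m + n.toNat).factorial : ℂ) * ((m + (-n).toNat).factorial : ℂ)
        = (Nat.factorial m : ℂ) * (Nat.factorial (n.natAbs + m) : ℂ) := by
      exact_mod_cast congrArg (Nat.cast : ℕ → ℂ) hfac
    have hexp : (m + n.toNat) + (m + (-n).toNat) = n.natAbs + 2 * m := by omega
    rw [← hzz]
    rw [show (-((x/2 : ℝ) : ℂ) * z⁻¹) = -(((x/2 : ℝ) : ℂ) * z⁻¹) by ring, neg_pow]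
    push_cast
    rw [← hexp, ← hfacC]
    ring
  rw [tsum_congr key, tsum_mul_right, tsum_mul_left, ← Complex.ofReal_tsum, besselJ_eq,
    show (∑' (k : ℕ), (-1 : ℝ) ^ k * (x / 2) ^ (n.natAbs + 2 * k) /
      (Nat.factorial k * Nat.factorial (n.natAbs + k))) = besselAux n.natAbs x from rfl,
    Complex.ofReal_mul, Complex.ofReal_pow, Complex.ofReal_neg, Complex.ofReal_one]

lemma jacobi_anger (x θ : ℝ) :
    ∑' n : ℤ, (besselJ n x : ℂ) * Complex.exp (((n : ℝ) * θ : ℝ) * Complex.I)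
      = Complex.exp ((x * Real.sin θ : ℝ) * Complex.I) := by
  set z : ℂ := Complex.exp ((θ : ℝ) * Complex.I) with hzdef
  have hz : z ≠ 0 := Complex.exp_ne_zero _
  set u : ℂ := ((x/2 : ℝ) : ℂ) * z with hudef
  set v : ℂ := -((x/2 : ℝ) : ℂ) * z⁻¹ with hvdef
  have h1 : Summable fun j : ℕ => ‖u ^ j / (Nat.factorial j : ℂ)‖ := by
    have : ∀ j : ℕ, ‖u ^ j / (Nat.factorial j : ℂ)‖ = ‖u‖ ^ j / (Nat.factorial j : ℝ) := by
      intro j; rw [norm_div, norm_pow]; simp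
    rw [summable_congr this]
    exact Real.summable_pow_div_factorial _
  have h2 : Summable fun j : ℕ => ‖v ^ j / (Nat.factorial j : ℂ)‖ := by
    have : ∀ j : ℕ, ‖v ^ j / (Nat.factorial j : ℂ)‖ = ‖v‖ ^ j / (Nat.factorial j : ℝ) := by
      intro j; rw [norm_div, norm_pow]; simp
    rw [summable_congr this]
    exact Real.summable_pow_div_factorial _
  have hF : Summable (fun p : ℕ × ℕ => u ^ p.1 / (Nat.factorial p.1 : ℂ) *
      (v ^ p.2 / (Nat.factorial p.2 : ℂ))) := (Summable.mul_norm h1 h2).of_norm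
  have hstepA : Complex.exp ((x * Real.sin θ : ℝ) * Complex.I) = Complex.exp u * Complex.exp v := by
    rw [← Complex.exp_add]
    congr 1
    rw [hudef, hvdef, hzdef, ← Complex.exp_neg]
    push_cast
    rw [Complex.sin, neg_mul]
    set A := Complex.exp ((θ : ℂ) * Complex.I)
    set B := Complex.exp (-((θ : ℂ) * Complex.I))
    linear_combination ((x : ℂ) * (B - A) / 2) * Complex.I_sq
  have hstepB : Complex.exp u * Complex.exp v
      = ∑' p : ℕ × ℕ, u ^ p.1 / (Nat.factorial p.1 : ℂ) * (v ^ p.2 / (Nat.factorial p.2 : ℂ)) := by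
    rw [Complex.exp_eq_exp_ℂ, NormedSpace.exp_eq_tsum_div]
    exact tsum_mul_tsum_of_summable_norm h1 h2
  have hstepC : ∑' p : ℕ × ℕ, u ^ p.1 / (Nat.factorial p.1 : ℂ) * (v ^ p.2 / (Nat.factorial p.2 : ℂ))
      = ∑' n : ℤ, ∑' m : ℕ, u ^ (m + n.toNat) / (Nat.factorial (m + n.toNat) : ℂ) *
          (v ^ (m + (-n).toNat) / (Nat.factorial (m + (-n).toNat) : ℂ)) := by
    rw [← pairEquiv.tsum_eq]
    exact Summable.tsum_prod' (pairEquiv.summable_iff.mpr hF) fun n =>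
      ((pairEquiv.summable_iff.mpr hF).prod_factor n)
  have hexpz : ∀ n : ℤ, Complex.exp (((n : ℝ) * θ : ℝ) * Complex.I) = z ^ (n : ℤ) := by
    intro n
    rw [hzdef, ← Complex.exp_int_mul]
    congr 1
    push_cast
    ring
  calc ∑' n : ℤ, (besselJ n x : ℂ) * Complex.exp (((n : ℝ) * θ : ℝ) * Complex.I)
      = ∑' n : ℤ, (besselJ n x : ℂ) * z ^ (n : ℤ) := by
        exact tsum_congr fun n => by rw [hexpz n]
    _ = ∑' n : ℤ, ∑' m : ℕ, u ^ (m + n.toNat) / (Nat.factorial (m + n.toNat) : ℂ) *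
          (v ^ (m + (-n).toNat) / (Nat.factorial (m + (-n).toNat) : ℂ)) := by
        exact tsum_congr fun n => (inner_eval x z hz n).symm
    _ = Complex.exp ((x * Real.sin θ : ℝ) * Complex.I) := by
        rw [← hstepC, ← hstepB, ← hstepA]


lemma zpow_sum_Ioc (ζ : ℂ) (ε : ℕ) (hε : 1 ≤ ε) (hζ : ζ ^ ε = 1) (L : ℤ) :
    ∑ l ∈ Finset.Ioc L (L + ε), ζ ^ l = if ζ = 1 then (ε : ℂ) else 0 := by
  have hζ0 : ζ ≠ 0 := by
    intro h
    rw [h, zero_pow (by omega : ε ≠ 0)] at hζ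
    exact one_ne_zero hζ.symm
  have hset : Finset.Ioc L (L + (ε : ℤ)) =
      (Finset.range ε).map ⟨fun j : ℕ => L + 1 + j, show Function.Injective (fun j : ℕ => L + 1 + (j : ℤ)) from by intro a b h; simp at h; omega⟩ := by
    ext l
    simp only [Finset.mem_Ioc, Finset.mem_map, Finset.mem_range, Function.Embedding.coeFn_mk]
    constructor
    · intro h
      exact ⟨(l - L - 1).toNat, by omega, by omega⟩
    · rintro ⟨j, hj, rfl⟩
      omega
  rw [hset, Finset.sum_map]
  simp only [Function.Embedding.coeFn_mk]
  have hterm : ∀ j : ℕ, ζ ^ (L + 1 + (j : ℤ)) = ζ ^ (L + 1) * ζ ^ j := by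
    intro j
    rw [zpow_add₀ hζ0, zpow_natCast]
  rw [Finset.sum_congr rfl fun j _ => hterm j, ← Finset.mul_sum]
  by_cases h1 : ζ = 1
  · subst h1; simp
  · rw [geom_sum_eq h1, hζ, if_neg h1]
    simp

lemma exp_sum_Ioc (ε : ℕ) (hε : 1 ≤ ε) (a : ℤ) :
    ∑ l ∈ Finset.Ioc (-(((ε + 1) / 2 : ℕ) : ℤ)) ((ε / 2 : ℕ) : ℤ),
      Complex.exp ((l : ℂ) * (2 * π * Complex.I * a / ε))
    = if (ε : ℤ) ∣ a then (ε : ℂ) else 0 := by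
  have hεC : (ε : ℂ) ≠ 0 := Nat.cast_ne_zero.2 (by omega)
  have hπ : (π : ℂ) ≠ 0 := Complex.ofReal_ne_zero.2 pi_ne_zero
  set ζ : ℂ := Complex.exp (2 * π * Complex.I * a / ε) with hζdef
  have hζε : ζ ^ ε = 1 := by
    rw [hζdef, ← Complex.exp_nat_mul,
      show (ε : ℂ) * (2 * π * Complex.I * a / ε) = (a : ℂ) * (2 * π * Complex.I) by
        field_simp]
    exact Complex.exp_int_mul_two_pi_mul_I a
  have hζ1 : (ζ = 1) ↔ ((ε : ℤ) ∣ a) := by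
    rw [hζdef, Complex.exp_eq_one_iff]
    constructor
    · rintro ⟨n, hn⟩
      refine ⟨n, ?_⟩
      have h2 : (2 * (π : ℂ) * Complex.I) ≠ 0 := by
        simp [hπ, Complex.I_ne_zero]
      have key : (a : ℂ) = (ε : ℂ) * n := by
        apply mul_left_cancel₀ h2
        field_simp at hn
        linear_combination (2 * (π : ℂ) * Complex.I) * hn
      exact_mod_cast key
    · rintro ⟨c, rfl⟩
      refine ⟨c, ?_⟩
      push_cast
      field_simp
  have hL : ((ε / 2 : ℕ) : ℤ) = -(((ε + 1) / 2 : ℕ) : ℤ) + ε := by omega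
  rw [hL]
  have hterm : ∀ l : ℤ, Complex.exp ((l : ℂ) * (2 * π * Complex.I * a / ε)) = ζ ^ l :=
    fun l => Complex.exp_int_mul _ l
  rw [Finset.sum_congr rfl fun l _ => hterm l, zpow_sum_Ioc ζ ε hε hζε]
  rw [if_congr hζ1 rfl rfl]


/-- `Σ_{m ∈ εℤ+k} J_m(x)·exp(imt)
  = (1/ε)·Σ_{ω∈Ω_ε} exp(i(−kω + x·sin(ω+t)))`, with `Ω_ε = {2ℓπ/ε : −⌈ε/2⌉ < ℓ ≤ ⌊ε/2⌋}`,
the left-hand series converging absolutely. -/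
theorem tsum_besselJ_exp_eq (ε : ℕ) (hε : 1 ≤ ε) (k : ℤ) (x t : ℝ) :
    Summable (fun m : ℤ =>
      ‖(besselJ ((ε : ℤ) * m + k) x : ℂ) *
        Complex.exp (((((ε : ℤ) * m + k : ℤ) : ℝ) * t : ℝ) * Complex.I)‖) ∧
    ∑' m : ℤ, (besselJ ((ε : ℤ) * m + k) x : ℂ) *
        Complex.exp (((((ε : ℤ) * m + k : ℤ) : ℝ) * t : ℝ) * Complex.I)
      = (1 / (ε : ℂ)) * ∑ l ∈ Finset.Ioc (-(((ε + 1) / 2 : ℕ) : ℤ)) ((ε / 2 : ℕ) : ℤ),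
          Complex.exp (((-(k : ℝ) * (2 * (l : ℝ) * π / ε)
            + x * Real.sin (2 * (l : ℝ) * π / ε + t) : ℝ)) * Complex.I) := by
  have hεZ : (ε : ℤ) ≠ 0 := by omega
  have hεC : (ε : ℂ) ≠ 0 := Nat.cast_ne_zero.2 (by omega)
  have hinj : Function.Injective (fun m : ℤ => (ε : ℤ) * m + k) := by
    intro a b hab
    simp only at hab
    have h2 : (ε : ℤ) * a = (ε : ℤ) * b := by linarith
    exact mul_left_cancel₀ hεZ h2
  -- the norm simplification
  have hnorm : ∀ n : ℤ, ∀ θ : ℝ, ‖(besselJ n x : ℂ) * Complex.exp (((n : ℝ) * θ : ℝ) * Complex.I)‖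
      = |besselJ n x| := by
    intro n θ
    rw [norm_mul, Complex.norm_real, Real.norm_eq_abs,
      Complex.norm_exp_ofReal_mul_I, mul_one]
  have hsummable : ∀ θ : ℝ, Summable (fun n : ℤ =>
      (besselJ n x : ℂ) * Complex.exp (((n : ℝ) * θ : ℝ) * Complex.I)) := by
    intro θ
    apply Summable.of_norm
    simp only [hnorm]
    exact summable_abs_besselJ x
  constructor
  · have heq : (fun m : ℤ => ‖(besselJ ((ε : ℤ) * m + k) x : ℂ) *
        Complex.exp (((((ε : ℤ) * m + k : ℤ) : ℝ) * t : ℝ) * Complex.I)‖)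
        = (fun n : ℤ => |besselJ n x|) ∘ (fun m : ℤ => (ε : ℤ) * m + k) := by
      funext m
      exact hnorm _ t
    rw [heq]
    exact (summable_abs_besselJ x).comp_injective hinj
  · symm
    set L : ℤ := -(((ε + 1) / 2 : ℕ) : ℤ) with hLdef
    set R : ℤ := ((ε / 2 : ℕ) : ℤ) with hRdef
    -- the function on all of ℤ
    set f : ℤ → ℂ := fun n => if (ε : ℤ) ∣ (n - k) then
        (besselJ n x : ℂ) * Complex.exp (((n : ℝ) * t : ℝ) * Complex.I) else 0 with hfdef
    have step1 : ∀ l ∈ Finset.Ioc L R,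
        Complex.exp (((-(k : ℝ) * (2 * (l : ℝ) * π / ε)
            + x * Real.sin (2 * (l : ℝ) * π / ε + t) : ℝ)) * Complex.I)
        = ∑' n : ℤ, (besselJ n x : ℂ) * Complex.exp (((n : ℝ) * t : ℝ) * Complex.I) *
            Complex.exp ((((n - k : ℤ) : ℂ)) * (2 * π * Complex.I * l / ε)) := by
      intro l _
      rw [Complex.ofReal_add, add_mul, Complex.exp_add, ← jacobi_anger x (2 * (l : ℝ) * π / ε + t),
        ← tsum_mul_left]
      apply tsum_congr
      intro n
      rw [mul_left_comm, ← Complex.exp_add, mul_assoc ((besselJ n x : ℝ) : ℂ), ← Complex.exp_add]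
      congr 2
      push_cast
      ring
    rw [Finset.sum_congr rfl step1]
    have hswap : ∑ l ∈ Finset.Ioc L R, ∑' n : ℤ,
          (besselJ n x : ℂ) * Complex.exp (((n : ℝ) * t : ℝ) * Complex.I) *
            Complex.exp ((((n - k : ℤ) : ℂ)) * (2 * π * Complex.I * l / ε))
        = ∑' n : ℤ, ∑ l ∈ Finset.Ioc L R,
          (besselJ n x : ℂ) * Complex.exp (((n : ℝ) * t : ℝ) * Complex.I) *
            Complex.exp ((((n - k : ℤ) : ℂ)) * (2 * π * Complex.I * l / ε)) := by
      rw [Summable.tsum_finsetSum]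
      intro l _
      apply Summable.of_norm
      have hb : ∀ n : ℤ, ‖(besselJ n x : ℂ) * Complex.exp (((n : ℝ) * t : ℝ) * Complex.I) *
          Complex.exp ((((n - k : ℤ) : ℂ)) * (2 * π * Complex.I * l / ε))‖ = |besselJ n x| := by
        intro n
        rw [norm_mul, hnorm n t]
        have : (((n - k : ℤ) : ℂ)) * (2 * π * Complex.I * l / ε)
            = (((n - k : ℤ) * (2 * l * π / ε) : ℝ) : ℂ) * Complex.I := by
          push_cast; ring
        rw [this, Complex.norm_exp_ofReal_mul_I, mul_one]
      simp only [hb]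
      exact summable_abs_besselJ x
    rw [hswap]
    have step2 : ∀ n : ℤ, ∑ l ∈ Finset.Ioc L R,
          (besselJ n x : ℂ) * Complex.exp (((n : ℝ) * t : ℝ) * Complex.I) *
            Complex.exp ((((n - k : ℤ) : ℂ)) * (2 * π * Complex.I * l / ε))
        = (besselJ n x : ℂ) * Complex.exp (((n : ℝ) * t : ℝ) * Complex.I) *
            (if (ε : ℤ) ∣ (n - k) then (ε : ℂ) else 0) := by
      intro n
      rw [← Finset.mul_sum]
      congr 1
      rw [← exp_sum_Ioc ε hε (n - k)]
      apply Finset.sum_congr rfl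
      intro l _
      congr 1
      ring
    rw [tsum_congr step2]
    have step3 : (1 / (ε : ℂ)) * ∑' n : ℤ, (besselJ n x : ℂ) *
          Complex.exp (((n : ℝ) * t : ℝ) * Complex.I) *
            (if (ε : ℤ) ∣ (n - k) then (ε : ℂ) else 0)
        = ∑' n : ℤ, f n := by
      rw [← tsum_mul_left]
      apply tsum_congr
      intro n
      rw [hfdef]
      by_cases h : (ε : ℤ) ∣ (n - k)
      · rw [if_pos h]; simp only [if_pos h]
        field_simp
      · rw [if_neg h]; simp only [if_neg h]
        ring
    rw [step3]
    have step4 : ∑' n : ℤ, f n = ∑' m : ℤ, f ((ε : ℤ) * m + k) := by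
      symm
      apply hinj.tsum_eq
      intro n hn
      simp only [Function.mem_support, hfdef] at hn
      by_cases h : (ε : ℤ) ∣ (n - k)
      · obtain ⟨c, hc⟩ := h
        exact ⟨c, show (ε : ℤ) * c + k = n by omega⟩
      · exact absurd (if_neg h) hn
    rw [step4]
    apply tsum_congr
    intro m
    rw [hfdef]
    simp only
    rw [if_pos ⟨m, by ring⟩]


end
end

section
/- Let e ≥ 2 be an integer and k ∈ ℤ with k ∉ eℤ. Set Ω_{2e} = {ℓπ/e : −e < ℓ ≤ e}, ω_n = nπ/e, and e' = ⌈e/2⌉. Then Re[(2/(eπ))²·(Σ_{ω∈Ω_{2e}} ω·exp(2ikω) + 2π·Σ_{n=1}^{e'−1} (1 − sin ω_n)·exp(2ikω_n))] = (2/(πe²))·[cot((k−1/2)π/e) − cot((k+1/2)π/e)], and this quantity is nonzero. -/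
open MeasureTheory Filter Real

noncomputable section

namespace ReLimdAux

open Finset

lemma aux_sum_id_mul (x : ℂ) (N : ℕ) :
    (x - 1) * ∑ n ∈ Finset.range N, (n : ℂ) * x ^ n
      = N * x ^ N - x ^ N + 1 - ∑ n ∈ Finset.range N, x ^ n := by
  induction N with
  | zero => simp
  | succ N ih =>
    rw [Finset.sum_range_succ, Finset.sum_range_succ (fun n => x ^ n)]
    push_cast
    linear_combination ih

lemma key_alg (a w : ℂ) (ha : a ≠ 0) (hw : w ≠ 0) (h1 : a⁻¹ * w ≠ 1) (h2 : a * w ≠ 1) :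
    (1/(a⁻¹*w - 1) - 1/(a*w - 1)) * ((a⁻¹ + a)/2 - (w⁻¹ + w)/2) = (a⁻¹ - a)/2 := by
  have h1' : w - a ≠ 0 := by
    intro h
    rw [sub_eq_zero] at h
    exact h1 (by rw [h, inv_mul_cancel₀ ha])
  have h2' : a*w - 1 ≠ 0 := sub_ne_zero.mpr h2
  have ha' : a⁻¹ * w - 1 = (w - a) / a := by field_simp
  rw [ha']
  rw [div_sub_div _ _ (div_ne_zero h1' ha) h2', div_mul_eq_mul_div, div_eq_iff (mul_ne_zero (div_ne_zero h1' ha) h2')]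
  field_simp
  ring

lemma sum_Ioc_int (g : ℤ → ℂ) (e : ℕ) :
    ∑ l ∈ Finset.Ioc (0:ℤ) (e:ℤ), g l = ∑ n ∈ Finset.range e, g (n+1) := by
  refine Finset.sum_nbij' (fun l => (l - 1).toNat) (fun n => (n : ℤ) + 1) ?_ ?_ ?_ ?_ ?_ <;>
    simp only [Finset.mem_Ioc, Finset.mem_range] <;> intro x hx
  · omega
  · omega
  · omega
  · omega
  · have : ((x - 1).toNat : ℤ) + 1 = x := by omega
    rw [this]

lemma exp_ratio_ne_one (e : ℕ) (he : 0 < e) (m : ℤ) (hm : ¬ ((2*(e:ℤ))) ∣ m) :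
    Complex.exp (((m : ℝ) * π / e : ℝ) * Complex.I) ≠ 1 := by
  intro h
  rw [Complex.exp_eq_one_iff] at h
  obtain ⟨n, hn⟩ := h
  have him := congrArg Complex.im hn
  simp [Complex.mul_im, Complex.mul_re] at him
  apply hm
  have he' : (e:ℝ) ≠ 0 := Nat.cast_ne_zero.mpr he.ne'
  have hπ := Real.pi_ne_zero
  have him2 : (m:ℝ) * π = (n*(2*e):ℤ) * π := by push_cast; field_simp at him; linear_combination π * him
  have : (m:ℝ) = ((n*(2*e):ℤ):ℝ) := mul_right_cancel₀ hπ him2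
  have h3 : m = n*(2*e) := by exact_mod_cast this
  exact ⟨n, by rw [h3]; ring⟩

lemma exp_pow_nat (θ : ℝ) (n : ℕ) :
    Complex.exp ((θ:ℂ) * Complex.I) ^ n = Complex.exp (((n * θ : ℝ):ℂ) * Complex.I) := by
  rw [← Complex.exp_nat_mul]
  push_cast
  ring_nf

lemma exp_int_pi_pow (j : ℤ) : Complex.exp (((j:ℝ) * π :ℝ) * Complex.I) = (-1)^j := by
  push_cast
  rw [show ((j:ℂ) * (π:ℝ)) * Complex.I = (j:ℂ) * ((π:ℝ) * Complex.I) by ring,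
    Complex.exp_int_mul, Complex.exp_pi_mul_I]

lemma sum_weighted (e : ℕ) (he : 0 < e) (w : ℂ) (hw0 : w ≠ 0) (hwe : w ^ e = 1) (hw1 : w ≠ 1) :
    ∑ l ∈ Finset.Ioc (-(e:ℤ)) (e:ℤ), (l : ℂ) * w ^ l = (2*e : ℂ) * w / (w - 1) := by
  have hw1' : w - 1 ≠ 0 := sub_ne_zero.mpr hw1
  have hG : ∑ n ∈ Finset.range e, w ^ n = 0 := by
    rw [geom_sum_eq hw1, hwe]; simp
  have hunion : Finset.Ioc (-(e:ℤ)) (e:ℤ) = Finset.Ioc (-(e:ℤ)) 0 ∪ Finset.Ioc (0:ℤ) (e:ℤ) :=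
    (Finset.Ioc_union_Ioc_eq_Ioc (by omega) (by positivity)).symm
  rw [hunion, Finset.sum_union (by
    simp [Finset.disjoint_left, Finset.mem_Ioc]
    omega)]
  have hmap : (Finset.Ioc (0:ℤ) (e:ℤ)).map (addLeftEmbedding (-(e:ℤ))) = Finset.Ioc (-(e:ℤ)) 0 := by
    rw [Finset.map_add_left_Ioc]; norm_num
  have hleft : ∑ l ∈ Finset.Ioc (-(e:ℤ)) 0, (l:ℂ) * w ^ l
      = ∑ l ∈ Finset.Ioc (0:ℤ) (e:ℤ), ((-(e:ℤ) + l : ℤ) : ℂ) * w ^ (-(e:ℤ) + l) := by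
    rw [← hmap, Finset.sum_map]
    rfl
  have hzpowe : w ^ (-(e:ℤ)) = 1 := by
    rw [zpow_neg, zpow_natCast, hwe, inv_one]
  have hcomb : ∀ l : ℤ, ((-(e:ℤ) + l : ℤ) : ℂ) * w ^ (-(e:ℤ) + l) + (l:ℂ) * w ^ l
      = ((2*l - e : ℤ) : ℂ) * w ^ l := by
    intro l
    rw [zpow_add₀ hw0, hzpowe]
    push_cast
    ring
  rw [hleft, ← Finset.sum_add_distrib, Finset.sum_congr rfl (fun l _ => hcomb l),
    sum_Ioc_int (fun l : ℤ => ((2*l - e : ℤ) : ℂ) * w ^ l) e]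
  have hzp : ∀ n : ℕ, w ^ ((n:ℤ)+1) = w ^ (n+1) := by
    intro n
    rw [show ((n:ℤ)+1) = ((n+1:ℕ):ℤ) by push_cast; ring, zpow_natCast]
  have hS0 : ∑ n ∈ Finset.range e, w ^ (n+1) = 0 := by
    have : ∀ n : ℕ, w ^ (n+1) = w ^ n * w := fun n => pow_succ w n
    rw [Finset.sum_congr rfl (fun n _ => this n), ← Finset.sum_mul, hG, zero_mul]
  have hS1 : (w - 1) * ∑ n ∈ Finset.range e, ((n:ℂ)+1) * w ^ (n+1) = e * w := by
    have hsucc := Finset.sum_range_succ' (fun n => (n:ℂ) * w ^ n) e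
    have haux := aux_sum_id_mul w (e+1)
    rw [hsucc] at haux
    rw [Finset.sum_range_succ (fun n => w ^ n)] at haux
    simp only [Nat.cast_zero, zero_mul, pow_zero, mul_one, add_zero] at haux
    have hwsucc : w ^ (e+1) = w := by rw [pow_succ, hwe, one_mul]
    rw [hwsucc, hG, hwe] at haux
    push_cast at haux ⊢
    linear_combination haux
  have hstep : ∑ n ∈ Finset.range e, ((2*((n:ℤ)+1) - e : ℤ) : ℂ) * w ^ ((n:ℤ)+1)
      = 2 * ∑ n ∈ Finset.range e, ((n:ℂ)+1) * w ^ (n+1)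
        - (e:ℂ) * ∑ n ∈ Finset.range e, w ^ (n+1) := by
    rw [Finset.mul_sum, Finset.mul_sum, ← Finset.sum_sub_distrib]
    apply Finset.sum_congr rfl
    intro n _
    rw [hzp n]
    push_cast
    ring
  rw [hstep, hS0, mul_zero, sub_zero]
  field_simp
  linear_combination hS1

lemma sin_as (θ : ℝ) : ((Real.sin θ : ℝ):ℂ)
    = ((Complex.exp ((θ:ℂ) * Complex.I))⁻¹ - Complex.exp ((θ:ℂ) * Complex.I)) * Complex.I / 2 := by
  rw [Complex.ofReal_sin]
  simp only [Complex.sin]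
  rw [← Complex.exp_neg]
  ring_nf

lemma cos_as (θ : ℝ) : ((Real.cos θ : ℝ):ℂ)
    = (Complex.exp ((θ:ℂ) * Complex.I) + (Complex.exp ((θ:ℂ) * Complex.I))⁻¹) / 2 := by
  rw [Complex.ofReal_cos]
  simp only [Complex.cos]
  rw [← Complex.exp_neg]
  ring_nf

lemma V_times_D (e : ℕ) (he : 0 < e) (k : ℤ)
    (a w : ℂ)
    (ha : a = Complex.exp (((π/e : ℝ):ℂ) * Complex.I))
    (hw : w = Complex.exp (((2*(k:ℝ)*π/e : ℝ):ℂ) * Complex.I))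
    (hae : a ^ e = -1) (hwe : w ^ e = 1)
    (hw1 : w ≠ 1) (h1 : a⁻¹ * w ≠ 1) (h2 : a * w ≠ 1) :
    (∑ n ∈ Finset.range e, ((1 - Real.sin ((n:ℝ)*π/e) : ℝ):ℂ) * w ^ n)
        * ((Real.cos (π/e) - Real.cos (2*(k:ℝ)*π/e) : ℝ):ℂ)
      = ((Real.sin (π/e) : ℝ):ℂ) := by
  have ha0 : a ≠ 0 := ha ▸ Complex.exp_ne_zero _
  have hw0 : w ≠ 0 := hw ▸ Complex.exp_ne_zero _
  have hd1 : a⁻¹*w - 1 ≠ 0 := sub_ne_zero.mpr h1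
  have hd2 : a*w - 1 ≠ 0 := sub_ne_zero.mpr h2
  have hsummand : ∀ n ∈ Finset.range e, ((1 - Real.sin ((n:ℝ)*π/e) : ℝ):ℂ) * w ^ n
      = w ^ n - Complex.I/2 * ((a⁻¹ * w) ^ n - (a * w) ^ n) := by
    intro n _
    have hargs : ((n:ℝ)*π/e : ℝ) = (n : ℝ) * (π/e) := by ring
    have hs : ((Real.sin ((n:ℝ)*π/e) : ℝ):ℂ) = ((a^n)⁻¹ - a^n) * Complex.I / 2 := by
      rw [hargs, sin_as ((n:ℝ) * (π/e)), ha, exp_pow_nat]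
    rw [Complex.ofReal_sub, hs, Complex.ofReal_one, mul_pow, mul_pow, inv_pow]
    ring
  rw [Finset.sum_congr rfl hsummand]
  have hG : ∑ n ∈ Finset.range e, w ^ n = 0 := by
    rw [geom_sum_eq hw1, hwe]; simp
  have hGa : ∑ n ∈ Finset.range e, (a⁻¹ * w) ^ n = -2 / (a⁻¹*w - 1) := by
    rw [geom_sum_eq h1, mul_pow, inv_pow, hae, hwe]
    norm_num
  have hGb : ∑ n ∈ Finset.range e, (a * w) ^ n = -2 / (a*w - 1) := by
    rw [geom_sum_eq h2, mul_pow, hae, hwe]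
    norm_num
  have hV : ∑ n ∈ Finset.range e, (w ^ n - Complex.I/2 * ((a⁻¹ * w) ^ n - (a * w) ^ n))
      = Complex.I * (1/(a⁻¹*w - 1) - 1/(a*w - 1)) := by
    rw [Finset.sum_sub_distrib, ← Finset.mul_sum, Finset.sum_sub_distrib, hG, hGa, hGb]
    field_simp
    ring
  rw [hV]
  have hDa : ((Real.cos (π/e) : ℝ):ℂ) = (a + a⁻¹)/2 := by rw [cos_as, ha]
  have hDw : ((Real.cos (2*(k:ℝ)*π/e) : ℝ):ℂ) = (w + w⁻¹)/2 := by rw [cos_as, hw]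
  have hS : ((Real.sin (π/e) : ℝ):ℂ) = (a⁻¹ - a) * Complex.I / 2 := by rw [sin_as, ha]
  rw [Complex.ofReal_sub, hDa, hDw, hS]
  have hka := key_alg a w ha0 hw0 h1 h2
  calc Complex.I * (1/(a⁻¹*w - 1) - 1/(a*w - 1)) * ((a + a⁻¹)/2 - (w + w⁻¹)/2)
      = Complex.I * ((1/(a⁻¹*w - 1) - 1/(a*w - 1)) * ((a⁻¹ + a)/2 - (w⁻¹ + w)/2)) := by ring
    _ = Complex.I * ((a⁻¹ - a)/2) := by rw [hka]
    _ = (a⁻¹ - a) * Complex.I / 2 := by ring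

lemma reflect_sum (e : ℕ) (he : 2 ≤ e) (k : ℤ) :
    ∑ n ∈ Finset.range e,
        (1 - Real.sin ((n:ℝ)*π/e)) * Real.cos (2*(k:ℝ)*((n:ℝ)*π/e))
      = 1 + 2 * ∑ n ∈ Finset.Ico 1 ((e+1)/2),
        (1 - Real.sin ((n:ℝ)*π/e)) * Real.cos (2*(k:ℝ)*((n:ℝ)*π/e)) := by
  set f : ℕ → ℝ := fun n => (1 - Real.sin ((n:ℝ)*π/e)) * Real.cos (2*(k:ℝ)*((n:ℝ)*π/e)) with hf
  have he' : (e:ℝ) ≠ 0 := by positivity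
  have hf0 : f 0 = 1 := by simp [hf]
  have hsym : ∀ j : ℕ, 1 ≤ j → j ≤ e - 1 → f (e - j) = f j := by
    intro j h1 h2
    have hje : j ≤ e := by omega
    have hcast : ((e - j : ℕ) : ℝ) = (e : ℝ) - j := by
      push_cast [Nat.cast_sub hje]; ring
    have hsin : (((e - j : ℕ)):ℝ)*π/e = π - (j:ℝ)*π/e := by
      rw [hcast]; field_simp
    have hcos : 2*(k:ℝ)*(π - (j:ℝ)*π/e) = (k:ℝ) * (2*π) - 2*(k:ℝ)*((j:ℝ)*π/e) := by
      field_simp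
    simp only [hf]
    rw [hsin, hcos, Real.sin_pi_sub]
    rw [show ((k:ℝ) * (2*π) - 2*(k:ℝ)*((j:ℝ)*π/e)) = ((k:ℤ):ℝ) * (2*π) - 2*(k:ℝ)*((j:ℝ)*π/e) by norm_num,
      Real.cos_int_mul_two_pi_sub]
  set m := (e+1)/2 with hm
  have hm1 : 1 ≤ m := by omega
  have hme : m ≤ e := by omega
  have hsplit : ∑ n ∈ Finset.range e, f n = f 0 + ∑ n ∈ Finset.Ico 1 e, f n := by
    rw [Finset.range_eq_Ico, ← Finset.sum_Ico_consecutive f (by omega : 0 ≤ 1) (by omega : 1 ≤ e)]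
    simp
  have hsplit2 : ∑ n ∈ Finset.Ico 1 e, f n
      = ∑ n ∈ Finset.Ico 1 m, f n + ∑ n ∈ Finset.Ico m e, f n :=
    (Finset.sum_Ico_consecutive f hm1 hme).symm
  have hrefl : ∑ n ∈ Finset.Ico m e, f n = ∑ j ∈ Finset.Ico 1 (e+1-m), f (e - j) := by
    have h := Finset.sum_Ico_reflect f 1 (by omega : e + 1 - m ≤ e + 1)
    rw [show e + 1 - (e + 1 - m) = m from by omega, show e + 1 - 1 = e from by omega] at h
    exact h.symm
  have hrefl2 : ∑ j ∈ Finset.Ico 1 (e+1-m), f (e - j) = ∑ j ∈ Finset.Ico 1 (e+1-m), f j := by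
    apply Finset.sum_congr rfl
    intro j hj
    simp only [Finset.mem_Ico] at hj
    exact hsym j hj.1 (by omega)
  rcases Nat.even_or_odd e with ⟨t, ht⟩ | ⟨t, ht⟩
  · have hmt : m = t := by omega
    have h2 : e + 1 - m = t + 1 := by omega
    have hft : f t = 0 := by
      have : (t:ℝ)*π/e = π/2 := by
        rw [show ((e:ℝ)) = 2*t by push_cast [ht]; ring]
        have ht0 : (t:ℝ) ≠ 0 := by
          have : 1 ≤ t := by omega
          positivity
        field_simp
      simp only [hf, this, Real.sin_pi_div_two]
      norm_num
    rw [hsplit, hsplit2, hrefl, hrefl2, hf0, h2, Finset.sum_Ico_succ_top (by omega : 1 ≤ t)]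
    rw [hmt, hft]
    ring
  · have h2 : e + 1 - m = m := by omega
    rw [hsplit, hsplit2, hrefl, hrefl2, hf0, h2]
    ring

lemma sin_half_ne (e : ℕ) (he : 0 < e) (c : ℤ) (hodd : c % 2 = 1) :
    Real.sin (((c:ℝ)/2) * π / e) ≠ 0 := by
  have he' : (e:ℝ) ≠ 0 := by positivity
  have hπ := Real.pi_ne_zero
  intro h
  rw [Real.sin_eq_zero_iff] at h
  obtain ⟨n, hn⟩ := h
  have h2 : ((2*n*e : ℤ):ℝ) * π = ((c:ℤ):ℝ) * π := by
    push_cast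
    field_simp at hn
    linear_combination π * hn
  have h3 : ((2*n*e : ℤ):ℝ) = ((c:ℤ):ℝ) := mul_right_cancel₀ hπ h2
  have h4 : 2*n*(e:ℤ) = c := by exact_mod_cast h3
  have : Even c := ⟨n*e, by linarith⟩
  rw [Int.even_iff] at this
  omega

lemma cot_diff_eq (x y s : ℝ) (hx : Real.sin x ≠ 0) (hy : Real.sin y ≠ 0)
    (hs : y - x = s) :
    (Real.cot x - Real.cot y) * (Real.sin x * Real.sin y) = Real.sin s := by
  rw [Real.cot_eq_cos_div_sin, Real.cot_eq_cos_div_sin, ← hs, Real.sin_sub]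
  field_simp

lemma cos_diff_eq (e : ℕ) (he : 0 < e) (k : ℤ) :
    Real.cos (π/e) - Real.cos (2*(k:ℝ)*π/e)
      = 2 * (Real.sin (((k:ℝ) - 1/2) * π / e) * Real.sin (((k:ℝ) + 1/2) * π / e)) := by
  have he' : (e:ℝ) ≠ 0 := by positivity
  rw [Real.cos_sub_cos]
  rw [show (π/(e:ℝ) + 2*(k:ℝ)*π/e)/2 = ((k:ℝ) + 1/2) * π / e by field_simp; ring]
  rw [show (π/(e:ℝ) - 2*(k:ℝ)*π/e)/2 = -(((k:ℝ) - 1/2) * π / e) by field_simp; ring]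
  rw [Real.sin_neg]
  ring

lemma re_coef_exp (c θ : ℝ) :
    (((c : ℝ):ℂ) * Complex.exp ((θ:ℂ) * Complex.I)).re = c * Real.cos θ := by
  simp only [Complex.mul_re, Complex.ofReal_re, Complex.ofReal_im,
    Complex.exp_ofReal_mul_I_re, zero_mul, sub_zero]

end ReLimdAux


open ReLimdAux in
/-- explicit real part computation:
`Re[(2/(eπ))²·(Σ_{ω∈Ω_{2e}} ω·e^{2ikω} + 2π·Σ_{n=1}^{e'−1}(1 − sin ω_n)·e^{2ikω_n})]
  = (2/(πe²))·[cot((k−1/2)π/e) − cot((k+1/2)π/e)] ≠ 0`, where `ω_n = nπ/e`, `e' = ⌈e/2⌉`. -/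
theorem re_limd_eq (e : ℕ) (he : 2 ≤ e) (k : ℤ) (hk : ¬ (e : ℤ) ∣ k) :
    ((2 / ((e : ℂ) * (π : ℂ))) ^ 2 *
      ((∑ l ∈ Finset.Ioc (-(e : ℤ)) (e : ℤ),
          (((l : ℝ) * π / e : ℝ) : ℂ) *
            Complex.exp (((2 * (k : ℝ) * ((l : ℝ) * π / e) : ℝ)) * Complex.I))
        + 2 * (π : ℂ) * ∑ n ∈ Finset.Ico 1 ((e + 1) / 2),
            (((1 - Real.sin ((n : ℝ) * π / e) : ℝ)) : ℂ) *
              Complex.exp (((2 * (k : ℝ) * ((n : ℝ) * π / e) : ℝ)) * Complex.I))).re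
      = 2 / (π * (e : ℝ) ^ 2) *
          (Real.cot (((k : ℝ) - 1 / 2) * π / e) - Real.cot (((k : ℝ) + 1 / 2) * π / e)) ∧
    2 / (π * (e : ℝ) ^ 2) *
        (Real.cot (((k : ℝ) - 1 / 2) * π / e) - Real.cot (((k : ℝ) + 1 / 2) * π / e)) ≠ 0 := by
  have he0 : 0 < e := by omega
  have heR : (e:ℝ) ≠ 0 := by positivity
  have heC : (e:ℂ) ≠ 0 := Nat.cast_ne_zero.mpr (by omega)
  have hπ : (π:ℝ) ≠ 0 := Real.pi_ne_zero
  have hπC : (π:ℂ) ≠ 0 := Complex.ofReal_ne_zero.mpr hπ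
  set a : ℂ := Complex.exp (((π/e : ℝ):ℂ) * Complex.I) with ha
  set w : ℂ := Complex.exp (((2*(k:ℝ)*π/e : ℝ):ℂ) * Complex.I) with hw
  have ha0 : a ≠ 0 := Complex.exp_ne_zero _
  have hw0 : w ≠ 0 := Complex.exp_ne_zero _
  have hae : a ^ e = -1 := by
    rw [ha, exp_pow_nat]
    rw [show ((e:ℝ) * (π/e) : ℝ) = ((1:ℤ):ℝ) * π by push_cast; field_simp]
    rw [exp_int_pi_pow]
    norm_num
  have hwe : w ^ e = 1 := by
    rw [hw, exp_pow_nat]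
    rw [show ((e:ℝ) * (2*(k:ℝ)*π/e) : ℝ) = ((2*k:ℤ):ℝ) * π by push_cast; field_simp]
    rw [exp_int_pi_pow, zpow_mul]
    norm_num
  have hw1 : w ≠ 1 := by
    rw [hw, show ((2*(k:ℝ)*π/e : ℝ)) = (((2*k : ℤ):ℝ) * π / e : ℝ) by push_cast; ring]
    refine exp_ratio_ne_one e he0 (2*k) ?_
    rintro ⟨c, hc⟩
    exact hk ⟨c, by linarith⟩
  have haw : a * w = Complex.exp ((((2*k+1 : ℤ):ℝ) * π / e : ℝ) * Complex.I) := by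
    rw [ha, hw, ← Complex.exp_add]
    congr 1
    push_cast
    field_simp
    ring
  have haw1 : a * w ≠ 1 := by
    rw [haw]
    refine exp_ratio_ne_one e he0 (2*k+1) ?_
    rintro ⟨c, hc⟩
    have : Even (2*k+1) := ⟨(e:ℤ)*c, by linarith⟩
    rw [Int.even_iff] at this
    omega
  have hainvw : a⁻¹ * w = Complex.exp ((((2*k-1 : ℤ):ℝ) * π / e : ℝ) * Complex.I) := by
    rw [ha, hw, ← Complex.exp_neg, ← Complex.exp_add]
    congr 1
    push_cast
    field_simp
    ring
  have hainvw1 : a⁻¹ * w ≠ 1 := by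
    rw [hainvw]
    refine exp_ratio_ne_one e he0 (2*k-1) ?_
    rintro ⟨c, hc⟩
    have : Even (2*k-1) := ⟨(e:ℤ)*c, by linarith⟩
    rw [Int.even_iff] at this
    omega
  have hw1' : w - 1 ≠ 0 := sub_ne_zero.mpr hw1
  -- first sum
  have hsum1 : (∑ l ∈ Finset.Ioc (-(e : ℤ)) (e : ℤ),
        (((l : ℝ) * π / e : ℝ) : ℂ) *
          Complex.exp (((2 * (k : ℝ) * ((l : ℝ) * π / e) : ℝ)) * Complex.I))
      = ((2*π : ℝ):ℂ) * (w / (w - 1)) := by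
    have hsummand : ∀ l ∈ Finset.Ioc (-(e : ℤ)) (e : ℤ),
        (((l : ℝ) * π / e : ℝ) : ℂ) *
            Complex.exp (((2 * (k : ℝ) * ((l : ℝ) * π / e) : ℝ)) * Complex.I)
          = ((π / e : ℝ) : ℂ) * ((l : ℂ) * w ^ l) := by
      intro l _
      have h1 : (((2 * (k : ℝ) * ((l : ℝ) * π / e) : ℝ)) : ℂ) * Complex.I
          = (l : ℂ) * ((((2*(k:ℝ)*π/e : ℝ)):ℂ) * Complex.I) := by
        push_cast
        ring
      rw [h1, Complex.exp_int_mul, ← hw]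
      push_cast
      ring
    rw [Finset.sum_congr rfl hsummand, ← Finset.mul_sum,
      sum_weighted e he0 w hw0 hwe hw1]
    push_cast
    field_simp
  -- real part of w/(w-1)
  have hre_half : (w/(w-1)).re = 1/2 := by
    have hconj : (starRingEnd ℂ) w = w⁻¹ := by
      rw [hw, ← Complex.exp_conj, ← Complex.exp_neg]
      congr 1
      rw [map_mul, Complex.conj_I, Complex.conj_ofReal]
      ring
    have hwinv1 : w⁻¹ - 1 ≠ 0 := by
      intro h
      rw [sub_eq_zero] at h
      exact hw1 (by rw [← inv_inv w, h, inv_one])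
    have h1w : (1:ℂ) - w ≠ 0 := fun h => hw1 (sub_eq_zero.mp h).symm
    have hadd : w/(w-1) + (starRingEnd ℂ) (w/(w-1)) = 1 := by
      rw [map_div₀, map_sub, map_one, hconj]
      field_simp
      ring
    have h2 := (Complex.add_conj (w/(w-1))).symm.trans hadd
    have h3 := congrArg Complex.re h2
    simp at h3
    linarith
  -- real part of second sum
  have hTre : (∑ n ∈ Finset.Ico 1 ((e + 1) / 2),
        (((1 - Real.sin ((n : ℝ) * π / e) : ℝ)) : ℂ) *
          Complex.exp (((2 * (k : ℝ) * ((n : ℝ) * π / e) : ℝ)) * Complex.I)).re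
      = ∑ n ∈ Finset.Ico 1 ((e + 1) / 2),
          (1 - Real.sin ((n:ℝ)*π/e)) * Real.cos (2*(k:ℝ)*((n:ℝ)*π/e)) := by
    rw [Complex.re_sum]
    apply Finset.sum_congr rfl
    intro n _
    exact re_coef_exp (1 - Real.sin ((n:ℝ)*π/e)) (2*(k:ℝ)*((n:ℝ)*π/e))
  -- the key real identity
  set Tre : ℝ := ∑ n ∈ Finset.Ico 1 ((e + 1) / 2),
      (1 - Real.sin ((n:ℝ)*π/e)) * Real.cos (2*(k:ℝ)*((n:ℝ)*π/e)) with hTredef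
  set V' : ℝ := ∑ n ∈ Finset.range e,
      (1 - Real.sin ((n:ℝ)*π/e)) * Real.cos (2*(k:ℝ)*((n:ℝ)*π/e)) with hV'def
  have hreflect : V' = 1 + 2 * Tre := reflect_sum e he k
  have hVD : V' * (Real.cos (π/e) - Real.cos (2*(k:ℝ)*π/e)) = Real.sin (π/e) := by
    have hC := V_times_D e he0 k a w ha hw hae hwe hw1 hainvw1 haw1
    have hVCre : (∑ n ∈ Finset.range e, ((1 - Real.sin ((n:ℝ)*π/e) : ℝ):ℂ) * w ^ n).re = V' := by
      rw [Complex.re_sum, hV'def]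
      apply Finset.sum_congr rfl
      intro n _
      rw [hw, exp_pow_nat, re_coef_exp]
      rw [show ((n:ℝ)*(2*(k:ℝ)*π/e) : ℝ) = 2*(k:ℝ)*((n:ℝ)*π/e) from by ring]
    have hre := congrArg Complex.re hC
    simp only [Complex.mul_re, Complex.ofReal_re, Complex.ofReal_im,
      mul_zero, sub_zero] at hre
    rw [hVCre] at hre
    exact hre
  -- sine nonvanishing
  have harg1 : (((2*k-1:ℤ):ℝ)/2) * π / e = ((k:ℝ) - 1/2) * π / e := by push_cast; ring
  have harg2 : (((2*k+1:ℤ):ℝ)/2) * π / e = ((k:ℝ) + 1/2) * π / e := by push_cast; ring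
  have hsm : Real.sin (((k:ℝ) - 1/2) * π / e) ≠ 0 :=
    harg1 ▸ sin_half_ne e he0 (2*k-1) (by omega)
  have hsp : Real.sin (((k:ℝ) + 1/2) * π / e) ≠ 0 :=
    harg2 ▸ sin_half_ne e he0 (2*k+1) (by omega)
  have hcot := cot_diff_eq (((k:ℝ) - 1/2) * π / e) (((k:ℝ) + 1/2) * π / e) (π/e) hsm hsp
    (by field_simp; ring)
  have hDD := cos_diff_eq e he0 k
  have hSS : Real.sin (((k:ℝ) - 1/2) * π / e) * Real.sin (((k:ℝ) + 1/2) * π / e) ≠ 0 :=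
    mul_ne_zero hsm hsp
  -- R = 2 * V'
  set R : ℝ := Real.cot (((k:ℝ) - 1/2) * π / e) - Real.cot (((k:ℝ) + 1/2) * π / e) with hR
  have hReq : R = 2 * V' := by
    apply mul_right_cancel₀ hSS
    rw [hcot]
    rw [hDD] at hVD
    linarith [hVD]
  have hsinpos : 0 < Real.sin (π/e) := by
    apply Real.sin_pos_of_pos_of_lt_pi
    · positivity
    · apply div_lt_self Real.pi_pos
      exact_mod_cast by omega
  have hR0 : R ≠ 0 := by
    intro h
    rw [h, zero_mul] at hcot
    linarith
  constructor
  · -- main equality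
    rw [hsum1]
    have hfac : ((2 / ((e : ℂ) * (π : ℂ))) ^ 2 *
          (((2*π : ℝ):ℂ) * (w / (w - 1)) + 2 * (π : ℂ) * (∑ n ∈ Finset.Ico 1 ((e + 1) / 2),
            (((1 - Real.sin ((n : ℝ) * π / e) : ℝ)) : ℂ) *
              Complex.exp (((2 * (k : ℝ) * ((n : ℝ) * π / e) : ℝ)) * Complex.I))))
        = ((8 / ((e:ℝ)^2*π) : ℝ):ℂ) * (w / (w - 1) + (∑ n ∈ Finset.Ico 1 ((e + 1) / 2),
            (((1 - Real.sin ((n : ℝ) * π / e) : ℝ)) : ℂ) *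
              Complex.exp (((2 * (k : ℝ) * ((n : ℝ) * π / e) : ℝ)) * Complex.I))) := by
      generalize (∑ n ∈ Finset.Ico 1 ((e + 1) / 2), (((1 - Real.sin ((n : ℝ) * π / e) : ℝ)) : ℂ) * Complex.exp (((2 * (k : ℝ) * ((n : ℝ) * π / e) : ℝ)) * Complex.I)) = S
      push_cast
      field_simp
      ring
    rw [hfac]
    simp only [Complex.mul_re, Complex.ofReal_re, Complex.ofReal_im, zero_mul, sub_zero,
      Complex.add_re]
    rw [hre_half, hTre, hReq, hreflect]
    field_simp
    ring
  · exact mul_ne_zero (by positivity) hR0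

end
end

section
/- Let e ≥ 2 be an integer and let B be the e×e circulant matrix with entries b_{ij} = cot((j−i+1/2)π/e) − cot((j−i−1/2)π/e) for i, j ∈ ℤ/eℤ (cot is π-periodic, so b_{ij} depends only on j−i mod e). Then for each k ∈ {0,…,e−1}, the vector (exp(2πikj/e))_{0≤j<e} is an eigenvector of B with eigenvalue λ_k = 2e·sin(kπ/e); equivalently, Σ_{j=0}^{e−1} [cot((j+1/2)π/e) − cot((j−1/2)π/e)]·cos(2kjπ/e) = 2e·sin(kπ/e). In particular the eigenvalues of B are 2e·sin(kπ/e) for k = 0,…,e−1, and the only zero eigenvalue is λ_0. -/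
open MeasureTheory Filter Real

noncomputable section

/-- The entries of the circulant covariance matrix `B`. -/
def bEntry (e : ℕ) (m : ℤ) : ℝ :=
  Real.cot (((m : ℝ) + 1 / 2) * π / e) - Real.cot (((m : ℝ) - 1 / 2) * π / e)

namespace CircAux

lemma cot_mul_key (θ : ℝ) (h : Real.sin θ ≠ 0) :
    (Real.cot θ : ℂ) * (Complex.exp (2*θ*Complex.I) - 1)
      = Complex.I * (Complex.exp (2*θ*Complex.I) + 1) := by
  have hsne : Complex.sin θ ≠ 0 := by
    rw [← Complex.ofReal_sin]; exact_mod_cast h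
  rw [Complex.ofReal_cot, Complex.cot_eq_cos_div_sin, div_mul_eq_mul_div,
    div_eq_iff hsne, Complex.sin, Complex.cos]
  have h2 : Complex.exp (2*θ*Complex.I) = Complex.exp ((θ:ℂ)*Complex.I) * Complex.exp ((θ:ℂ)*Complex.I) := by
    rw [← Complex.exp_add]; ring_nf
  have hv : Complex.exp (-(θ:ℂ)*Complex.I) = (Complex.exp ((θ:ℂ)*Complex.I))⁻¹ := by
    rw [← Complex.exp_neg]; ring_nf
  have hu0 : Complex.exp ((θ:ℂ)*Complex.I) ≠ 0 := Complex.exp_ne_zero _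
  rw [h2, hv]
  field_simp
  linear_combination (-((Complex.exp ((θ:ℂ)*Complex.I))^2+1)*(1-(Complex.exp ((θ:ℂ)*Complex.I))^2)) * Complex.I_sq

lemma exp2_ne_one (θ : ℝ) (h : Real.sin θ ≠ 0) :
    Complex.exp (2*θ*Complex.I) ≠ 1 := by
  intro hc
  apply h
  have hs : Complex.sin θ = 0 := by
    rw [Complex.sin]
    have hu : Complex.exp (-(θ:ℂ) * Complex.I) * Complex.exp ((θ:ℂ) * Complex.I) = 1 := by
      rw [← Complex.exp_add]; simp
    have h2 : Complex.exp ((θ:ℂ) * Complex.I) * Complex.exp ((θ:ℂ) * Complex.I) = 1 := by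
      rw [← Complex.exp_add]; rw [show ((θ:ℂ)*Complex.I + θ*Complex.I) = 2*θ*Complex.I by ring, hc]
    have hne := Complex.exp_ne_zero ((θ:ℂ) * Complex.I)
    have heq : Complex.exp (-(θ:ℂ) * Complex.I) = Complex.exp ((θ:ℂ) * Complex.I) := by
      rw [← h2] at hu
      exact mul_right_cancel₀ hne hu
    rw [heq]; ring
  have h0 : (Real.sin θ : ℂ) = 0 := by rw [Complex.ofReal_sin, hs]
  exact_mod_cast h0

/-- the primitive 2e-th root of unity -/
def zeta (e : ℕ) : ℂ := Complex.exp ((π : ℂ) * Complex.I / e)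

lemma he0 {e : ℕ} (he : 2 ≤ e) : (e:ℂ) ≠ 0 := by
  have h : e ≠ 0 := by omega
  exact_mod_cast h

lemma heR {e : ℕ} (he : 2 ≤ e) : (e:ℝ) ≠ 0 := by
  have h : e ≠ 0 := by omega
  exact_mod_cast h

lemma zeta_pow (e : ℕ) (n : ℕ) : (zeta e)^n = Complex.exp ((n:ℂ) * π * Complex.I / e) := by
  rw [zeta, ← Complex.exp_nat_mul]
  ring_nf

lemma zeta_pow_two_e {e : ℕ} (he : 2 ≤ e) : (zeta e)^(2*e) = 1 := by
  rw [zeta_pow]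
  have harg : ((2*e : ℕ):ℂ) * π * Complex.I / e = 2 * π * Complex.I := by
    push_cast
    field_simp [he0 he]
  rw [harg]
  exact Complex.exp_two_pi_mul_I

lemma zeta_ne_zero (e : ℕ) : zeta e ≠ 0 := Complex.exp_ne_zero _

lemma sin_half_ne {e : ℕ} (he : 2 ≤ e) (j : ℕ) : Real.sin (((j:ℝ)+1/2)*π/e) ≠ 0 := by
  intro hs
  rw [Real.sin_eq_zero_iff] at hs
  obtain ⟨n, hn⟩ := hs
  have heR' := heR he
  have key : (2*(n:ℝ)*e) * π = (2*(j:ℝ)+1) * π := by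
    field_simp at hn
    linear_combination π * hn
  have key2 := mul_right_cancel₀ Real.pi_ne_zero key
  have key3 : (2*n*e : ℤ) = 2*(j:ℤ)+1 := by exact_mod_cast key2
  have hdvd : (2:ℤ) ∣ 2*n*e := ⟨n*e, by ring⟩
  rw [key3] at hdvd
  omega

/-- w j = ζ^(2j+1) -/
lemma w_exp {e : ℕ} (he : 2 ≤ e) (j : ℕ) :
    (zeta e)^(2*j+1) = Complex.exp (2*(((j:ℝ)+1/2)*π/e : ℝ)*Complex.I) := by
  rw [zeta_pow]
  congr 1
  push_cast
  field_simp

lemma w_ne_one {e : ℕ} (he : 2 ≤ e) (j : ℕ) : (zeta e)^(2*j+1) ≠ 1 := by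
  rw [w_exp he]
  exact exp2_ne_one _ (sin_half_ne he j)

lemma cot_w {e : ℕ} (he : 2 ≤ e) (j : ℕ) :
    (Real.cot (((j:ℝ)+1/2)*π/e) : ℂ) * ((zeta e)^(2*j+1) - 1)
      = Complex.I * ((zeta e)^(2*j+1) + 1) := by
  rw [w_exp he]
  exact cot_mul_key _ (sin_half_ne he j)


lemma zeta_sq_pow_ne_one {e : ℕ} (he : 2 ≤ e) {m : ℕ} (h1 : 1 ≤ m) (h2 : m < e) :
    (zeta e)^(2*m) ≠ 1 := by
  intro hc
  rw [zeta_pow] at hc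
  have harg : ((2*m : ℕ):ℂ) * π * Complex.I / e = ((2*m*π/e : ℝ) : ℂ) * Complex.I := by
    push_cast; field_simp [he0 he]
  rw [harg] at hc
  have hre : Real.cos (2*m*π/e) = 1 := by
    have := congrArg Complex.re hc
    rwa [Complex.exp_ofReal_mul_I_re] at this
  have hπ := Real.pi_pos
  have heR' : (0:ℝ) < e := by positivity
  have hmR : (0:ℝ) < m := by exact_mod_cast h1
  have hlt : (2*(m:ℝ)*π/e) < 2*π := by
    rw [div_lt_iff₀ heR']
    have : (m:ℝ) < e := by exact_mod_cast h2
    nlinarith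
  have hgt : (0:ℝ) < 2*m*π/e := by positivity
  have := (Real.cos_eq_one_iff_of_lt_of_lt (by linarith) hlt).1 hre
  linarith

lemma geom_zero {e : ℕ} (he : 2 ≤ e) {m : ℕ} (h1 : 1 ≤ m) (h2 : m < e) :
    ∑ j ∈ Finset.range e, ((zeta e)^(2*m))^j = 0 := by
  rw [geom_sum_eq (zeta_sq_pow_ne_one he h1 h2)]
  have : ((zeta e)^(2*m))^e = 1 := by
    rw [← pow_mul, show 2*m*e = (2*e)*m by ring, pow_mul, zeta_pow_two_e he, one_pow]
  rw [this]
  simp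

lemma w_pow_sum_zero {e : ℕ} (he : 2 ≤ e) {m : ℕ} (h1 : 1 ≤ m) (h2 : m < e) :
    ∑ j ∈ Finset.range e, ((zeta e)^(2*j+1))^m = 0 := by
  have hterm : ∀ j, ((zeta e)^(2*j+1))^m = (zeta e)^m * ((zeta e)^(2*m))^j := by
    intro j
    rw [← pow_mul, ← pow_mul, ← pow_add]
    congr 1
    ring
  simp only [hterm]
  rw [← Finset.mul_sum, geom_zero he h1 h2, mul_zero]


lemma auxhalf (w : ℂ) (h0 : w ≠ 0) (h1 : 1 - w ≠ 0) : (1-w)⁻¹ + (1-w⁻¹)⁻¹ = 1 := by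
  have h2 : (1 - w⁻¹) = -((1 - w) * w⁻¹) := by field_simp; ring
  rw [h2, ← neg_inv, mul_inv, inv_inv]
  field_simp
  ring

lemma w_reflect {e : ℕ} (he : 2 ≤ e) {j : ℕ} (hj : j < e) :
    (zeta e)^(2*(e-1-j)+1) = ((zeta e)^(2*j+1))⁻¹ := by
  have hmul : (zeta e)^(2*(e-1-j)+1) * (zeta e)^(2*j+1) = 1 := by
    rw [← pow_add, show 2*(e-1-j)+1 + (2*j+1) = 2*e by omega, zeta_pow_two_e he]
  exact eq_inv_of_mul_eq_one_left hmul

lemma half_sum {e : ℕ} (he : 2 ≤ e) :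
    ∑ j ∈ Finset.range e, (1 - (zeta e)^(2*j+1))⁻¹ = e/2 := by
  set S := ∑ j ∈ Finset.range e, (1 - (zeta e)^(2*j+1))⁻¹ with hS
  have hrefl : S = ∑ j ∈ Finset.range e, (1 - ((zeta e)^(2*j+1))⁻¹)⁻¹ := by
    rw [hS, ← Finset.sum_range_reflect]
    apply Finset.sum_congr rfl
    intro j hj
    rw [w_reflect he (Finset.mem_range.mp hj)]
  have hsum : S + S = e := by
    nth_rewrite 2 [hrefl]
    rw [← Finset.sum_add_distrib]
    have hterm : ∀ j ∈ Finset.range e,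
        (1 - (zeta e)^(2*j+1))⁻¹ + (1 - ((zeta e)^(2*j+1))⁻¹)⁻¹ = 1 := by
      intro j hj
      have h1 : (1:ℂ) - (zeta e)^(2*j+1) ≠ 0 := by
        intro hc
        exact w_ne_one he j (by linear_combination -hc)
      have h0 : (zeta e)^(2*j+1) ≠ 0 := pow_ne_zero _ (zeta_ne_zero e)
      exact auxhalf _ h0 h1
    rw [Finset.sum_congr rfl hterm]
    simp
  have : (2:ℂ) * S = e := by rw [two_mul]; exact hsum
  field_simp at this ⊢
  linear_combination this


lemma cot_pointwise {e : ℕ} (he : 2 ≤ e) (j k : ℕ) :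
    (Real.cot (((j:ℝ)+1/2)*π/e) : ℂ) * ((zeta e)^(2*j+1))^k
      = Complex.I * (((zeta e)^(2*j+1))^k
          + 2 * (∑ m ∈ Finset.range k, ((zeta e)^(2*j+1))^m)
          - 2 * (1 - (zeta e)^(2*j+1))⁻¹) := by
  set w := (zeta e)^(2*j+1) with hw
  have hne : w - 1 ≠ 0 := sub_ne_zero.2 (w_ne_one he j)
  apply mul_right_cancel₀ hne
  have hgsm := geom_sum_mul w k
  have hinv : (1 - w)⁻¹ * (w - 1) = -1 := by
    have h1 : (1:ℂ) - w ≠ 0 := by intro hc; apply hne; linear_combination -hc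
    field_simp
    ring
  have hc := cot_w he j
  linear_combination w^k * hc + (-2*Complex.I) * hgsm + (2*Complex.I)*hinv

lemma T_sum {e : ℕ} (he : 2 ≤ e) {k : ℕ} (h1 : 1 ≤ k) (h2 : k < e) :
    ∑ j ∈ Finset.range e, (Real.cot (((j:ℝ)+1/2)*π/e) : ℂ) * ((zeta e)^(2*j+1))^k
      = Complex.I * e := by
  have hpt : ∀ j ∈ Finset.range e, (Real.cot (((j:ℝ)+1/2)*π/e) : ℂ) * ((zeta e)^(2*j+1))^k
      = Complex.I * (((zeta e)^(2*j+1))^k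
          + 2 * (∑ m ∈ Finset.range k, ((zeta e)^(2*j+1))^m)
          - 2 * (1 - (zeta e)^(2*j+1))⁻¹) := fun j _ => cot_pointwise he j k
  rw [Finset.sum_congr rfl hpt, ← Finset.mul_sum]
  have hsplit : ∑ j ∈ Finset.range e, (((zeta e)^(2*j+1))^k
          + 2 * (∑ m ∈ Finset.range k, ((zeta e)^(2*j+1))^m)
          - 2 * (1 - (zeta e)^(2*j+1))⁻¹)
      = (∑ j ∈ Finset.range e, ((zeta e)^(2*j+1))^k)
        + 2 * (∑ j ∈ Finset.range e, ∑ m ∈ Finset.range k, ((zeta e)^(2*j+1))^m)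
        - 2 * (∑ j ∈ Finset.range e, (1 - (zeta e)^(2*j+1))⁻¹) := by
    rw [Finset.sum_sub_distrib, Finset.sum_add_distrib, Finset.mul_sum, Finset.mul_sum]
  rw [hsplit, w_pow_sum_zero he h1 h2, half_sum he]
  have hdouble : ∑ j ∈ Finset.range e, ∑ m ∈ Finset.range k, ((zeta e)^(2*j+1))^m = e := by
    rw [Finset.sum_comm]
    have : ∀ m ∈ Finset.range k, ∑ j ∈ Finset.range e, ((zeta e)^(2*j+1))^m
        = if m = 0 then (e:ℂ) else 0 := by
      intro m hm
      rcases Nat.eq_zero_or_pos m with h | h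
      · subst h; simp
      · rw [if_neg (by omega)]
        exact w_pow_sum_zero he h (lt_of_lt_of_le (Finset.mem_range.mp hm) (le_of_lt h2))
    rw [Finset.sum_congr rfl this, Finset.sum_ite_eq' (Finset.range k) 0 (fun _ => (e:ℂ)),
      if_pos (Finset.mem_range.mpr (by omega))]
  rw [hdouble]
  ring

lemma cot_wrap {e : ℕ} (he : 2 ≤ e) :
    Real.cot ((((0:ℕ):ℝ)-1/2)*π/e) = Real.cot (((((e-1:ℕ)):ℝ)+1/2)*π/e) := by
  have heR' : (e:ℝ) ≠ 0 := heR he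
  have h1 : (((0:ℕ):ℝ)-1/2)*π/e = -(π/(2*e)) := by push_cast; field_simp; ring
  have h2 : (((((e-1:ℕ)):ℝ))+1/2)*π/e = π - π/(2*e) := by
    have : (((e-1:ℕ)):ℝ) = (e:ℝ) - 1 := by
      have : 1 ≤ e := by omega
      push_cast [this]; ring
    rw [this]; field_simp; ring
  rw [h1, h2, Real.cot_eq_cos_div_sin, Real.cot_eq_cos_div_sin,
    Real.cos_pi_sub, Real.sin_pi_sub, Real.cos_neg, Real.sin_neg, neg_div, div_neg]

lemma shift_sum {e : ℕ} (he : 2 ≤ e) (k : ℕ) :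
    ∑ j ∈ Finset.range e, ((Real.cot (((j:ℝ)-1/2)*π/e) : ℝ):ℂ) * (zeta e)^(2*j*k)
      = (zeta e)^(2*k) * ∑ j ∈ Finset.range e, ((Real.cot (((j:ℝ)+1/2)*π/e) : ℝ):ℂ) * (zeta e)^(2*j*k) := by
  obtain ⟨e', rfl⟩ : ∃ e', e = e' + 1 := ⟨e - 1, by omega⟩
  rw [Finset.sum_range_succ' _ e']
  rw [Finset.mul_sum, Finset.sum_range_succ]
  congr 1
  · apply Finset.sum_congr rfl
    intro j hj
    have harg : (((j+1:ℕ):ℝ)-1/2)*π/((e'+1:ℕ):ℝ) = (((j:ℕ):ℝ)+1/2)*π/((e'+1:ℕ):ℝ) := by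
      push_cast; ring
    have hpow : (zeta (e'+1))^(2*(j+1)*k) = (zeta (e'+1))^(2*k) * (zeta (e'+1))^(2*j*k) := by
      rw [← pow_add]; congr 1; ring
    rw [harg, hpow]; ring
  · have hc := cot_wrap he
    simp only [Nat.add_sub_cancel] at hc
    have hpow : (zeta (e'+1))^(2*k) * (zeta (e'+1))^(2*e'*k) = 1 := by
      rw [← pow_add]
      have harith : 2*k + 2*e'*k = (2*(e'+1))*k := by ring
      rw [harith, pow_mul, zeta_pow_two_e he, one_pow]
    rw [hc]
    calc ((Real.cot ((((e':ℕ):ℝ)+1/2)*π/((e'+1:ℕ):ℝ)) : ℝ):ℂ) * (zeta (e'+1))^(2*0*k)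
        = ((Real.cot ((((e':ℕ):ℝ)+1/2)*π/((e'+1:ℕ):ℝ)) : ℝ):ℂ)
            * ((zeta (e'+1))^(2*k) * (zeta (e'+1))^(2*e'*k)) := by rw [hpow]; norm_num
      _ = (zeta (e'+1))^(2*k) * (((Real.cot ((((e':ℕ):ℝ)+1/2)*π/((e'+1:ℕ):ℝ)) : ℝ):ℂ) * (zeta (e'+1))^(2*e'*k)) := by
          ring

lemma main_sum {e : ℕ} (he : 2 ≤ e) {k : ℕ} (hk : k < e) :
    ∑ j ∈ Finset.range e,
        ((Real.cot (((j:ℝ)+1/2)*π/e) - Real.cot (((j:ℝ)-1/2)*π/e) : ℝ) : ℂ) * (zeta e)^(2*j*k)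
      = 2*(e:ℂ)*((Real.sin ((k:ℝ)*π/e) : ℝ):ℂ) := by
  have hB : ∑ j ∈ Finset.range e,
        ((Real.cot (((j:ℝ)+1/2)*π/e) - Real.cot (((j:ℝ)-1/2)*π/e) : ℝ) : ℂ) * (zeta e)^(2*j*k)
      = (1 - (zeta e)^(2*k)) * ∑ j ∈ Finset.range e, ((Real.cot (((j:ℝ)+1/2)*π/e) : ℝ):ℂ) * (zeta e)^(2*j*k) := by
    rw [sub_mul, one_mul, ← shift_sum he k, ← Finset.sum_sub_distrib]
    apply Finset.sum_congr rfl
    intro j hj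
    push_cast
    ring
  rcases Nat.eq_zero_or_pos k with hk0 | hk1
  · subst hk0
    norm_num at hB ⊢
    rw [hB]
  · -- k ≥ 1
    have hzkne : (zeta e)^k ≠ 0 := pow_ne_zero _ (zeta_ne_zero e)
    have hTk : (∑ j ∈ Finset.range e, ((Real.cot (((j:ℝ)+1/2)*π/e) : ℝ):ℂ) * (zeta e)^(2*j*k)) * (zeta e)^k
        = Complex.I * e := by
      rw [Finset.sum_mul, ← T_sum he hk1 hk]
      apply Finset.sum_congr rfl
      intro j hj
      rw [← pow_mul, mul_assoc, ← pow_add]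
      congr 2
      ring
    have hzk : (zeta e)^k = ((Real.cos ((k:ℝ)*π/e) : ℝ):ℂ) + ((Real.sin ((k:ℝ)*π/e) : ℝ):ℂ) * Complex.I := by
      rw [zeta_pow]
      have harg : ((k:ℕ):ℂ) * π * Complex.I / e = (((k:ℝ)*π/e : ℝ):ℂ) * Complex.I := by
        push_cast; ring
      rw [harg, Complex.exp_mul_I, Complex.ofReal_cos, Complex.ofReal_sin]
    have hz2 : (zeta e)^(2*k) = ((zeta e)^k)^2 := by
      rw [← pow_mul]; congr 1; ring
    have hpy : ((Real.cos ((k:ℝ)*π/e) : ℝ):ℂ)^2 + ((Real.sin ((k:ℝ)*π/e) : ℝ):ℂ)^2 = 1 := by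
      exact_mod_cast Real.cos_sq_add_sin_sq ((k:ℝ)*π/e)
    have key : (2*(e:ℂ)*((Real.sin ((k:ℝ)*π/e) : ℝ):ℂ)) * (zeta e)^k
        = (1 - (zeta e)^(2*k)) * (Complex.I * e) := by
      rw [hz2, hzk]
      set c := ((Real.cos ((k:ℝ)*π/e) : ℝ):ℂ)
      set s := ((Real.sin ((k:ℝ)*π/e) : ℝ):ℂ)
      linear_combination (Complex.I*(e:ℂ))*hpy + ((e:ℂ)*s^2*Complex.I + 2*c*s*(e:ℂ))*Complex.I_sq
    apply mul_right_cancel₀ hzkne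
    rw [hB, mul_assoc, hTk, ← key]


lemma cot_period (x : ℝ) (q : ℤ) : Real.cot (x + q*π) = Real.cot x := by
  rw [Real.cot_eq_cos_div_sin, Real.cot_eq_cos_div_sin,
    Real.cos_add_int_mul_pi, Real.sin_add_int_mul_pi]
  rw [mul_div_mul_left _ _ (by positivity : ((-1:ℝ))^q ≠ 0)]

lemma bEntry_period {e : ℕ} (he : 2 ≤ e) (m q : ℤ) : bEntry e (m + q*e) = bEntry e m := by
  have heR' := heR he
  unfold bEntry
  have h1 : (((m + q*e : ℤ)):ℝ) + 1/2 = ((m:ℝ) + 1/2) + q*e := by push_cast; ring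
  have h2 : (((m + q*e : ℤ)):ℝ) - 1/2 = ((m:ℝ) - 1/2) + q*e := by push_cast; ring
  have h3 : ∀ y : ℝ, (y + (q:ℝ)*e) * π / e = y*π/e + q*π := by
    intro y; field_simp
  rw [h1, h2, h3, h3, cot_period, cot_period]

lemma zeta_pow_mod {e : ℕ} (he : 2 ≤ e) (k a : ℕ) :
    (zeta e)^(2*k*(a % e)) = (zeta e)^(2*k*a) := by
  have h1 : (zeta e)^(2*e*(k*(a/e))) = 1 := by
    rw [pow_mul, zeta_pow_two_e he, one_pow]
  have h2 : 2*k*a = 2*k*(a%e) + 2*e*(k*(a/e)) := by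
    conv_lhs => rw [show a = e*(a/e) + a % e from (Nat.div_add_mod a e).symm]
    ring
  rw [h2, pow_add, h1, mul_one]

lemma zeta_re {e : ℕ} (he : 2 ≤ e) (n : ℕ) : ((zeta e)^n).re = Real.cos ((n:ℝ)*π/e) := by
  rw [zeta_pow]
  have harg : ((n:ℕ):ℂ) * π * Complex.I / e = (((n:ℝ)*π/e : ℝ):ℂ) * Complex.I := by
    push_cast; ring
  rw [harg, Complex.exp_ofReal_mul_I_re]

lemma vec_eq {e : ℕ} (he : 2 ≤ e) (k n : ℕ) :
    Complex.exp (((2*π*(k:ℝ)*(n:ℝ)/e : ℝ):ℂ) * Complex.I) = (zeta e)^(2*k*n) := by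
  rw [zeta_pow]
  congr 1
  push_cast
  ring

lemma bEntry_nat (e : ℕ) (j : ℕ) : bEntry e (j:ℤ)
    = Real.cot (((j:ℝ)+1/2)*π/e) - Real.cot (((j:ℝ)-1/2)*π/e) := by
  unfold bEntry
  norm_num

lemma part2 {e : ℕ} (he : 2 ≤ e) (k : ℕ) (hk : k < e) :
    ∑ j ∈ Finset.range e,
        (Real.cot (((j:ℝ) + 1/2) * π / e) - Real.cot (((j:ℝ) - 1/2) * π / e)) *
          Real.cos (2 * (k : ℝ) * (j:ℝ) * π / e)
      = 2 * (e:ℝ) * Real.sin ((k:ℝ) * π / e) := by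
  have hm := main_sum he hk
  have hre := congrArg Complex.re hm
  rw [Complex.re_sum] at hre
  have hterm : ∀ j ∈ Finset.range e,
      (((Real.cot (((j:ℝ)+1/2)*π/e) - Real.cot (((j:ℝ)-1/2)*π/e) : ℝ) : ℂ) * (zeta e)^(2*j*k)).re
        = (Real.cot (((j:ℝ) + 1/2) * π / e) - Real.cot (((j:ℝ) - 1/2) * π / e)) *
          Real.cos (2 * (k : ℝ) * (j:ℝ) * π / e) := by
    intro j hj
    rw [Complex.re_ofReal_mul, zeta_re he]
    congr 2
    push_cast
    ring
  rw [Finset.sum_congr rfl hterm] at hre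
  have hrhs : (2*(e:ℂ)*((Real.sin ((k:ℝ)*π/e) : ℝ):ℂ)).re = 2 * (e:ℝ) * Real.sin ((k:ℝ) * π / e) := by
    have : 2*(e:ℂ)*((Real.sin ((k:ℝ)*π/e) : ℝ):ℂ) = (((2*(e:ℝ)*Real.sin ((k:ℝ)*π/e)) : ℝ):ℂ) := by
      push_cast; ring
    rw [this, Complex.ofReal_re]
  rw [hrhs] at hre
  exact hre

lemma part3 {e : ℕ} (he : 2 ≤ e) (k : ℕ) (hk : k < e) :
    2 * (e:ℝ) * Real.sin ((k:ℝ) * π / e) = 0 ↔ k = 0 := by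
  constructor
  · intro h
    by_contra hne
    have hk1 : 1 ≤ k := by omega
    have heps : (0:ℝ) < e := by positivity
    have hkR : (1:ℝ) ≤ (k:ℝ) := by exact_mod_cast hk1
    have hklt : (k:ℝ) < e := by exact_mod_cast hk
    have hpos : 0 < (k:ℝ)*π/e := by
      have := Real.pi_pos
      positivity
    have hlt : (k:ℝ)*π/e < π := by
      rw [div_lt_iff₀ heps]
      have := Real.pi_pos
      nlinarith
    have := Real.sin_pos_of_pos_of_lt_pi hpos hlt
    nlinarith
  · intro h
    subst h
    simp

lemma part1 {e : ℕ} (he : 2 ≤ e) (k : Fin e) :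
    (Matrix.of fun i j : Fin e => ((bEntry e ((j : ℤ) - (i : ℤ)) : ℝ) : ℂ)).mulVec
        (fun j : Fin e => Complex.exp (((2 * π * (k : ℝ) * (j : ℝ) / e : ℝ)) * Complex.I))
      = (2 * (e : ℂ) * ((Real.sin ((k : ℝ) * π / e) : ℝ) : ℂ)) •
          fun j : Fin e => Complex.exp (((2 * π * (k : ℝ) * (j : ℝ) / e : ℝ)) * Complex.I) := by
  haveI : NeZero e := ⟨by omega⟩
  funext i
  simp only [Matrix.mulVec, dotProduct, Matrix.of_apply, Pi.smul_apply, smul_eq_mul]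
  have hvec : ∀ j : Fin e, Complex.exp (((2 * π * (k : ℝ) * (j : ℝ) / e : ℝ):ℂ) * Complex.I)
      = (zeta e)^(2*(k:ℕ)*(j:ℕ)) := fun j => vec_eq he (k:ℕ) (j:ℕ)
  simp only [hvec]
  -- reindex
  have hre : ∑ j : Fin e, ((bEntry e ((j : ℤ) - (i : ℤ)) : ℝ) : ℂ) * (zeta e)^(2*(k:ℕ)*(j:ℕ))
      = ∑ j : Fin e, ((bEntry e (((i + j : Fin e) : ℤ) - (i : ℤ)) : ℝ) : ℂ)
          * (zeta e)^(2*(k:ℕ)*((i + j : Fin e):ℕ)) := by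
    exact (Equiv.sum_comp (Equiv.addLeft i)
      (fun j : Fin e => ((bEntry e ((j : ℤ) - (i : ℤ)) : ℝ) : ℂ) * (zeta e)^(2*(k:ℕ)*(j:ℕ)))).symm
  rw [hre]
  have hterm : ∀ j : Fin e,
      ((bEntry e (((i + j : Fin e) : ℤ) - (i : ℤ)) : ℝ) : ℂ) * (zeta e)^(2*(k:ℕ)*((i + j : Fin e):ℕ))
        = (zeta e)^(2*(k:ℕ)*(i:ℕ)) * (((bEntry e ((j:ℕ) : ℤ) : ℝ):ℂ) * (zeta e)^(2*(k:ℕ)*(j:ℕ))) := by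
    intro j
    have hval : ((i + j : Fin e) : ℕ) = ((i:ℕ) + (j:ℕ)) % e := Fin.val_add i j
    set q : ℕ := ((i:ℕ) + (j:ℕ)) / e with hq
    have h0 : ((e:ℤ))*(q:ℤ) + ((((i:ℕ)+(j:ℕ)) % e : ℕ):ℤ) = ((i:ℕ):ℤ)+((j:ℕ):ℤ) := by
      exact_mod_cast Nat.div_add_mod ((i:ℕ)+(j:ℕ)) e
    have hbe : bEntry e (((i + j : Fin e) : ℤ) - (i : ℤ)) = bEntry e ((j:ℕ) : ℤ) := by
      have harg : (((i + j : Fin e) : ℕ):ℤ) - ((i:ℕ):ℤ) = ((j:ℕ):ℤ) + (-(q:ℤ))*(e:ℤ) := by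
        rw [hval]
        linarith [h0]
      rw [harg, bEntry_period he]
    have hzp : (zeta e)^(2*(k:ℕ)*((i + j : Fin e):ℕ)) = (zeta e)^(2*(k:ℕ)*(i:ℕ)) * (zeta e)^(2*(k:ℕ)*(j:ℕ)) := by
      rw [hval, zeta_pow_mod he, ← pow_add]
      congr 1
      ring
    rw [hbe, hzp]
    ring
  rw [Finset.sum_congr rfl (fun j _ => hterm j), ← Finset.mul_sum]
  have hfin : ∑ j : Fin e, (((bEntry e ((j:ℕ) : ℤ) : ℝ):ℂ) * (zeta e)^(2*(k:ℕ)*(j:ℕ)))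
      = ∑ j ∈ Finset.range e, (((bEntry e ((j:ℕ) : ℤ) : ℝ):ℂ) * (zeta e)^(2*(k:ℕ)*(j:ℕ))) := by
    exact Fin.sum_univ_eq_sum_range (fun n => (((bEntry e (n : ℤ)) : ℝ):ℂ) * (zeta e)^(2*(k:ℕ)*n)) e
  rw [hfin]
  have hmain : ∑ j ∈ Finset.range e, (((bEntry e ((j:ℕ) : ℤ) : ℝ):ℂ) * (zeta e)^(2*(k:ℕ)*(j:ℕ)))
      = 2*(e:ℂ)*((Real.sin (((k:ℕ):ℝ)*π/e) : ℝ):ℂ) := by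
    rw [← main_sum he k.isLt]
    apply Finset.sum_congr rfl
    intro j hj
    rw [bEntry_nat]
    congr 1
    congr 1
    ring
  rw [hmain]
  ring
end CircAux

/-- for each `k`, `(e^{2πikj/e})_j` is an eigenvector of the circulant matrix `B`
with eigenvalue `2e·sin(kπ/e)`; equivalently
`Σ_{j=0}^{e−1} [cot((j+1/2)π/e) − cot((j−1/2)π/e)]·cos(2kjπ/e) = 2e·sin(kπ/e)`;
and among `k ∈ {0,…,e−1}` the eigenvalue vanishes only for `k = 0`. -/
theorem eigenvalues_of_circulant_B (e : ℕ) (he : 2 ≤ e) :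
    (∀ k : Fin e,
      (Matrix.of fun i j : Fin e => ((bEntry e ((j : ℤ) - (i : ℤ)) : ℝ) : ℂ)).mulVec
          (fun j : Fin e => Complex.exp (((2 * π * (k : ℝ) * (j : ℝ) / e : ℝ)) * Complex.I))
        = (2 * (e : ℂ) * ((Real.sin ((k : ℝ) * π / e) : ℝ) : ℂ)) •
            fun j : Fin e => Complex.exp (((2 * π * (k : ℝ) * (j : ℝ) / e : ℝ)) * Complex.I)) ∧
    (∀ k : ℕ, k < e →
      ∑ j ∈ Finset.range e,
          (Real.cot (((j : ℝ) + 1 / 2) * π / e) - Real.cot (((j : ℝ) - 1 / 2) * π / e)) *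
            Real.cos (2 * (k : ℝ) * (j : ℝ) * π / e)
        = 2 * (e : ℝ) * Real.sin ((k : ℝ) * π / e)) ∧
    (∀ k : ℕ, k < e → (2 * (e : ℝ) * Real.sin ((k : ℝ) * π / e) = 0 ↔ k = 0)) := by
  exact ⟨fun k => CircAux.part1 he k, fun k hk => CircAux.part2 he k hk,
    fun k hk => CircAux.part3 he k hk⟩

end
end
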